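/- arXiv:1707.00327 — 9 statements merged into one kernel-verified Lean document; each statement's English description precedes it below -/
import Mathlib

section
/- If L is an injective semilinear operator on a complex Hilbert space H with dim H ≥ 3 that sends orthogonal vectors to orthogonal vectors, then L is a non-zero scalar multiple of a linear or conjugate-linear isometry. -/
/-!
Additivity turns the orthogonality `x + y ⊥ x - y` of orthogonal vectors of equal norm into
`‖L x‖ = ‖L y‖`. In dimension at least three any two vectors of equal norm have a common
orthogonal vector of that norm, so `‖L x‖` depends only on `‖x‖`. Applying `L` to
`a • e + y ⊥ e - conj a • y` shows that `σ` commutes with complex conjugation; hence `σ` fixes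
`ℝ` and is the identity or conjugation. In either case `‖L x‖ = k ‖x‖` with `k = ‖L e‖`,
positive by injectivity, and `k⁻¹ • L` is the required isometry.
-/

open InnerProductSpace ComplexConjugate

theorem Complex.ringHom_eq_id_or_conj_of_map_conj {σ : ℂ →+* ℂ}
    (hσ : ∀ a, σ (conj a) = conj (σ a)) : σ = RingHom.id ℂ ∨ σ = conj := by
  have him : ∀ r : ℝ, (σ r).im = 0 := fun r =>
    Complex.conj_eq_iff_im.mp (by rw [← hσ, Complex.conj_ofReal])
  let σℝ : ℝ →+* ℝ :=
    { toFun := fun r => (σ r).re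
      map_one' := by simp
      map_mul' := fun r s => by simp [Complex.mul_re, him]
      map_zero' := by simp
      map_add' := fun r s => by simp }
  have hreal : ∀ r : ℝ, σ r = r := fun r =>
    Complex.ext (congrArg (· r) (Subsingleton.elim σℝ (RingHom.id ℝ))) (by simp [him])
  have hsmul : ∀ (r : ℝ) (z : ℂ), σ (r • z) = r • σ z := fun r z => by
    simp [Complex.real_smul, hreal]
  simpa only [DFunLike.ext_iff] using! Complex.real_algHom_eq_id_or_conj (AlgHom.mk' σ hsmul)

theorem exists_smul_linearIsometry_of_norm_map_eq {𝕜 E F : Type*} [RCLike 𝕜]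
    [NormedAddCommGroup E] [NormedSpace 𝕜 E] [NormedAddCommGroup F] [NormedSpace 𝕜 F]
    {σ : 𝕜 →+* 𝕜} [RingHomIsometric σ] (f : E →ₛₗ[σ] F)
    (hf : ∀ x y : E, ‖x‖ = ‖y‖ → ‖f x‖ = ‖f y‖) {e : E} (he : ‖e‖ = 1)
    (hfe : f e ≠ 0) : ∃ c : 𝕜, c ≠ 0 ∧ ∃ T : E →ₛₗᵢ[σ] F, ∀ x, f x = c • T x := by
  set k := ‖f e‖
  have hk : (k : 𝕜) ≠ 0 := by simpa [k] using hfe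
  have hnorm : ∀ x, ‖f x‖ = k * ‖x‖ := fun x => by
    have : ‖x‖ = ‖(‖x‖ : 𝕜) • e‖ := by simp [norm_smul, he]
    rw [hf _ _ this, map_smulₛₗ, norm_smul, RingHomIsometric.norm_map, RCLike.norm_ofReal,
      abs_norm, mul_comm]
  refine ⟨k, hk, ⟨(k : 𝕜)⁻¹ • f, fun x => ?_⟩, fun x => (smul_inv_smul₀ hk (f x)).symm⟩
  rw [LinearMap.smul_apply, norm_smul, norm_inv, RCLike.norm_ofReal, abs_norm, hnorm x,
    inv_mul_cancel_left₀ (by exact_mod_cast hk)]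

section
variable {𝕜 E F : Type*} [RCLike 𝕜] [NormedAddCommGroup E] [InnerProductSpace 𝕜 E]
  [NormedAddCommGroup F] [InnerProductSpace 𝕜 F]

theorem exists_norm_eq_inner_eq_zero_of_three_le_rank (hdim : 3 ≤ Module.rank 𝕜 E) (x y : E)
    {r : ℝ} (hr : 0 ≤ r) : ∃ z : E, ‖z‖ = r ∧ ⟪x, z⟫_𝕜 = 0 ∧ ⟪y, z⟫_𝕜 = 0 := by
  set K : Submodule 𝕜 E := Submodule.span 𝕜 {x, y}
  have : FiniteDimensional 𝕜 K := FiniteDimensional.span_of_finite 𝕜 (Set.toFinite _)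
  have hK : Kᗮ ≠ ⊥ := by
    rw [Ne, Submodule.orthogonal_eq_bot_iff]
    intro hKtop
    have : Module.rank 𝕜 K ≤ 2 :=
      calc Module.rank 𝕜 K ≤ Cardinal.mk ({x, y} : Set E) := rank_span_le _
        _ ≤ Cardinal.mk ({y} : Set E) + 1 := Cardinal.mk_insert_le
        _ = 2 := by rw [Cardinal.mk_singleton]; norm_num
    rw [hKtop, rank_top] at this
    exact absurd (hdim.trans this) (by norm_num)
  obtain ⟨z, hzK, hz⟩ := Submodule.exists_mem_ne_zero_of_ne_bot hK
  have hrz : ((r / ‖z‖ : ℝ) : 𝕜) • z ∈ Kᗮ := Kᗮ.smul_mem _ hzK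
  refine ⟨((r / ‖z‖ : ℝ) : 𝕜) • z, ?_, ?_, ?_⟩
  · rw [norm_smul, RCLike.norm_ofReal, abs_div, abs_norm, abs_of_nonneg hr,
      div_mul_cancel₀ _ (norm_ne_zero_iff.mpr hz)]
  · exact Submodule.inner_right_of_mem_orthogonal (Submodule.subset_span (by simp)) hrz
  · exact Submodule.inner_right_of_mem_orthogonal (Submodule.subset_span (by simp)) hrz

theorem norm_map_eq_of_inner_eq_zero {𝓕 : Type*} [FunLike 𝓕 E F] [AddMonoidHomClass 𝓕 E F]
    (f : 𝓕) (horth : ∀ x y, ⟪x, y⟫_𝕜 = 0 → ⟪f x, f y⟫_𝕜 = 0) {x y : E}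
    (hxy : ⟪x, y⟫_𝕜 = 0) (hnorm : ‖x‖ = ‖y‖) : ‖f x‖ = ‖f y‖ := by
  have hyx : ⟪y, x⟫_𝕜 = 0 := inner_eq_zero_symm.mp hxy
  have hsum : ⟪x + y, x - y⟫_𝕜 = 0 := by
    simp only [inner_add_left, inner_sub_right, inner_self_eq_norm_sq_to_K, hxy, hyx, hnorm]
    ring
  have hfsum := horth _ _ hsum
  rw [map_add, map_sub, inner_add_left, inner_sub_right, inner_sub_right, horth x y hxy,
    horth y x hyx, inner_self_eq_norm_sq_to_K, inner_self_eq_norm_sq_to_K, sub_zero, zero_sub,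
    add_neg_eq_zero] at hfsum
  exact (sq_eq_sq₀ (norm_nonneg _) (norm_nonneg _)).mp (by exact_mod_cast hfsum)

theorem norm_map_eq_of_norm_eq {𝓕 : Type*} [FunLike 𝓕 E F] [AddMonoidHomClass 𝓕 E F]
    (hdim : 3 ≤ Module.rank 𝕜 E) (f : 𝓕) (horth : ∀ x y, ⟪x, y⟫_𝕜 = 0 → ⟪f x, f y⟫_𝕜 = 0)
    {x y : E} (hnorm : ‖x‖ = ‖y‖) : ‖f x‖ = ‖f y‖ := by
  obtain ⟨z, hz, hxz, hyz⟩ :=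
    exists_norm_eq_inner_eq_zero_of_three_le_rank hdim x y (norm_nonneg x)
  calc ‖f x‖ = ‖f z‖ := norm_map_eq_of_inner_eq_zero f horth hxz hz.symm
    _ = ‖f y‖ := (norm_map_eq_of_inner_eq_zero f horth hyz (hnorm.symm.trans hz.symm)).symm

theorem map_conj_eq_conj_map_of_inner_eq_zero {σ : 𝕜 →+* 𝕜} (f : E →ₛₗ[σ] F)
    (horth : ∀ x y, ⟪x, y⟫_𝕜 = 0 → ⟪f x, f y⟫_𝕜 = 0) {e y : E} (hey : ⟪e, y⟫_𝕜 = 0)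
    (hnorm : ‖e‖ = ‖y‖) (he : f e ≠ 0) (a : 𝕜) : σ (conj a) = conj (σ a) := by
  have hye : ⟪y, e⟫_𝕜 = 0 := inner_eq_zero_symm.mp hey
  have hfnorm : ‖f e‖ = ‖f y‖ := norm_map_eq_of_inner_eq_zero f horth hey hnorm
  have horth' : ⟪a • e + y, e - conj a • y⟫_𝕜 = 0 := by
    simp only [inner_add_left, inner_sub_right, inner_smul_left, inner_smul_right,
      inner_self_eq_norm_sq_to_K, hey, hye, hnorm]
    ring
  have hf := horth _ _ horth'
  simp only [map_add, map_sub, map_smulₛₗ, inner_add_left, inner_sub_right, inner_smul_left,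
    inner_smul_right, horth e y hey, horth y e hye, inner_self_eq_norm_sq_to_K, ← hfnorm] at hf
  have hk : ((‖f e‖ : ℝ) : 𝕜) ^ 2 ≠ 0 := by simpa using he
  exact mul_right_cancel₀ hk (by linear_combination -hf)

end

theorem stmt_0_general {H : Type*} [NormedAddCommGroup H] [InnerProductSpace ℂ H]
    (hdim : 3 ≤ Module.rank ℂ H) (L : H → H)
    (hadd : ∀ x y : H, L (x + y) = L x + L y)
    (hsemi : ∃ σ : ℂ →+* ℂ, ∀ (a : ℂ) (x : H), L (a • x) = σ a • L x)
    (hinj : Function.Injective L)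
    (horth : ∀ x y : H, ⟪x, y⟫_ℂ = 0 → ⟪L x, L y⟫_ℂ = 0) :
    ∃ c : ℂ, c ≠ 0 ∧
      ((∃ T : H →ₗᵢ[ℂ] H, ∀ x, L x = c • T x) ∨
       (∃ T : H →ₗᵢ⋆[ℂ] H, ∀ x, L x = c • T x)) := by
  obtain ⟨σ, hσ⟩ := hsemi
  let f : H →ₛₗ[σ] H := ⟨⟨L, hadd⟩, hσ⟩
  have hf : ∀ x y : H, ‖x‖ = ‖y‖ → ‖f x‖ = ‖f y‖ := fun _ _ =>
    norm_map_eq_of_norm_eq hdim f horth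
  obtain ⟨e, he, -, -⟩ :=
    exists_norm_eq_inner_eq_zero_of_three_le_rank hdim (0 : H) 0 zero_le_one
  obtain ⟨y, hy, hey, -⟩ := exists_norm_eq_inner_eq_zero_of_three_le_rank hdim e e zero_le_one
  have hfe : f e ≠ 0 := fun h =>
    ne_zero_of_norm_ne_zero (he.trans_ne one_ne_zero) (hinj (h.trans (map_zero f).symm))
  rcases Complex.ringHom_eq_id_or_conj_of_map_conj
      (map_conj_eq_conj_map_of_inner_eq_zero f horth hey (he.trans hy.symm) hfe) with rfl | rfl
  · obtain ⟨c, hc, T, hT⟩ := exists_smul_linearIsometry_of_norm_map_eq f hf he hfe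
    exact ⟨c, hc, .inl ⟨T, hT⟩⟩
  · obtain ⟨c, hc, T, hT⟩ := exists_smul_linearIsometry_of_norm_map_eq f hf he hfe
    exact ⟨c, hc, .inr ⟨T, hT⟩⟩

theorem stmt_0 {H : Type*} [NormedAddCommGroup H] [InnerProductSpace ℂ H] [CompleteSpace H]
    (hdim : 3 ≤ Module.rank ℂ H) (L : H → H)
    (hadd : ∀ x y : H, L (x + y) = L x + L y)
    (hsemi : ∃ σ : ℂ →+* ℂ, ∀ (a : ℂ) (x : H), L (a • x) = σ a • L x)
    (hinj : Function.Injective L)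
    (horth : ∀ x y : H, ⟪x, y⟫_ℂ = 0 → ⟪L x, L y⟫_ℂ = 0) :
    ∃ c : ℂ, c ≠ 0 ∧
      ((∃ T : H →ₗᵢ[ℂ] H, ∀ x, L x = c • T x) ∨
       (∃ T : H →ₗᵢ⋆[ℂ] H, ∀ x, L x = c • T x)) :=
  stmt_0_general hdim L hadd hsemi hinj horth
end

section
/- If L is an additive map on a complex Hilbert space H with dim H ≥ 3 that sends orthogonal vectors to orthogonal vectors and is semilinear, then the function x ↦ ‖L(x)‖ is constant on the set of unit vectors of H. -/
open InnerProductSpace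
theorem stmt_2 {H : Type*} [NormedAddCommGroup H] [InnerProductSpace ℂ H] [CompleteSpace H]
    (hdim : 3 ≤ Module.rank ℂ H) (L : H → H)
    (hadd : ∀ x y : H, L (x + y) = L x + L y)
    (hsemi : ∃ σ : ℂ →+* ℂ, ∀ (a : ℂ) (x : H), L (a • x) = σ a • L x)
    (horth : ∀ x y : H, ⟪x, y⟫_ℂ = 0 → ⟪L x, L y⟫_ℂ = 0) :
    ∀ x y : H, ‖x‖ = 1 → ‖y‖ = 1 → ‖L x‖ = ‖L y‖ := by
  have hzero : L 0 = 0 := by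
    have := hadd 0 0
    simpa using this.symm
  have hneg : ∀ x : H, L (-x) = - L x := by
    intro x
    have h := hadd x (-x)
    rw [add_neg_cancel, hzero] at h
    exact eq_neg_of_add_eq_zero_right h.symm
  have hsub : ∀ x y : H, L (x - y) = L x - L y := by
    intro x y
    rw [sub_eq_add_neg, hadd, hneg, sub_eq_add_neg]
  have key : ∀ x y : H, ‖x‖ = 1 → ‖y‖ = 1 → ⟪x, y⟫_ℂ = 0 → ‖L x‖ = ‖L y‖ := by
    intro x y hx hy hxy
    have hyx : ⟪y, x⟫_ℂ = 0 := by
      rw [← inner_conj_symm, hxy]; simp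
    have h1 : ⟪x + y, x - y⟫_ℂ = 0 := by
      rw [inner_add_left, inner_sub_right, inner_sub_right, hxy, hyx,
        @inner_self_eq_norm_sq_to_K ℂ, @inner_self_eq_norm_sq_to_K ℂ, hx, hy]
      norm_num
    have h2 := horth _ _ h1
    rw [hadd, hsub, inner_add_left, inner_sub_right, inner_sub_right,
      horth x y hxy, horth y x hyx,
      @inner_self_eq_norm_sq_to_K ℂ, @inner_self_eq_norm_sq_to_K ℂ] at h2
    have h3 : (‖L x‖ : ℂ) ^ 2 = (‖L y‖ : ℂ) ^ 2 := by
      rw [sub_zero, zero_sub, ← sub_eq_add_neg] at h2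
      exact sub_eq_zero.mp h2
    have h4 : (‖L x‖ : ℝ) ^ 2 = (‖L y‖ : ℝ) ^ 2 := by exact_mod_cast h3
    nlinarith [norm_nonneg (L x), norm_nonneg (L y)]
  intro x y hx hy
  set K : Submodule ℂ H := Submodule.span ℂ {x, y} with hK
  have hKfin : FiniteDimensional ℂ K :=
    FiniteDimensional.span_of_finite ℂ ((Set.finite_singleton y).insert x)
  have hKbot : Kᗮ ≠ ⊥ := by
    intro hbot
    have htop : K = ⊤ := (Submodule.orthogonal_eq_bot_iff).mp hbot
    have hr : Module.rank ℂ K ≤ 2 := by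
      refine (rank_span_le (R := ℂ) ({x, y} : Set H)).trans ?_
      calc Cardinal.mk ({x, y} : Set H) ≤ Cardinal.mk ({y} : Set H) + 1 :=
            Cardinal.mk_insert_le
        _ ≤ 2 := by rw [Cardinal.mk_singleton]; norm_num
    have hH : Module.rank ℂ H ≤ 2 := by
      rw [← rank_top ℂ H, ← htop]; exact hr
    exact absurd (hdim.trans hH) (by norm_num)
  obtain ⟨z, hzK, hz0⟩ := Submodule.exists_mem_ne_zero_of_ne_bot hKbot
  set w : H := ‖z‖⁻¹ • z with hw
  have hwnorm : ‖w‖ = 1 := by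
    rw [hw, norm_smul]
    simp [norm_ne_zero_iff.mpr hz0]
  have hxw : ⟪x, w⟫_ℂ = 0 := by
    have hx' : x ∈ K := Submodule.subset_span (by simp)
    have := (Submodule.mem_orthogonal K z).mp hzK x hx'
    rw [hw, RCLike.real_smul_eq_coe_smul (K := ℂ), inner_smul_right, this, mul_zero]
  have hyw : ⟪y, w⟫_ℂ = 0 := by
    have hy' : y ∈ K := Submodule.subset_span (by simp)
    have := (Submodule.mem_orthogonal K z).mp hzK y hy'
    rw [hw, RCLike.real_smul_eq_coe_smul (K := ℂ), inner_smul_right, this, mul_zero]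
  have hwy : ⟪w, y⟫_ℂ = 0 := by rw [← inner_conj_symm, hyw]; simp
  calc ‖L x‖ = ‖L w‖ := key x w hx hwnorm hxw
    _ = ‖L y‖ := key w y hwnorm hy hwy
end

section
/- Every maximal compatible subset of a top ⟨U]_k in the Grassmannian G_k(H) contains precisely k+1 elements. -/
def Compatible {H : Type*} [NormedAddCommGroup H] [InnerProductSpace ℂ H]
    (X Y : Submodule ℂ H) : Prop :=
  ∃ X' Y' Z : Submodule ℂ H, X' ⟂ Y' ∧ X' ⟂ Z ∧ Y' ⟂ Z ∧ X = X' ⊔ Z ∧ Y = Y' ⊔ Z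

/-- A set of subspaces is compatible if any two distinct members are compatible. -/
def CompatibleSet {H : Type*} [NormedAddCommGroup H] [InnerProductSpace ℂ H]
    (M : Set (Submodule ℂ H)) : Prop :=
  ∀ X ∈ M, ∀ Y ∈ M, X ≠ Y → Compatible X Y

open Module Submodule

section Aux

variable {H : Type*} [NormedAddCommGroup H] [InnerProductSpace ℂ H]
variable {k : ℕ} {U : Submodule ℂ H} [FiniteDimensional ℂ U]

/-- Double orthocomplement within `U`. -/
lemma aux_double {A : Submodule ℂ H} (hA : A ≤ U) : (Aᗮ ⊓ U)ᗮ ⊓ U = A := by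
  haveI : FiniteDimensional ℂ ((Aᗮ ⊓ U)ᗮ ⊓ U : Submodule ℂ H) :=
    Submodule.finiteDimensional_of_le inf_le_right
  have h1 := Submodule.finrank_add_inf_finrank_orthogonal hA
  have h2 := Submodule.finrank_add_inf_finrank_orthogonal (inf_le_right : Aᗮ ⊓ U ≤ U)
  have hle : A ≤ (Aᗮ ⊓ U)ᗮ ⊓ U :=
    le_inf ((Submodule.le_orthogonal_orthogonal A).trans
      (Submodule.orthogonal_le inf_le_left)) hA
  exact (Submodule.eq_of_le_of_finrank_eq hle (by omega)).symm

lemma aux_fr_line {X : Submodule ℂ H} (hU : finrank ℂ U = k + 1)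
    (hXU : X ≤ U) (hXk : finrank ℂ X = k) : finrank ℂ (Xᗮ ⊓ U : Submodule ℂ H) = 1 := by
  have h1 := Submodule.finrank_add_inf_finrank_orthogonal hXU
  omega

/-- Compatibility of two distinct hyperplanes of `U` forces their orthocomplements
within `U` to be orthogonal lines. -/
lemma compat_ortho {X Y : Submodule ℂ H} (hU : finrank ℂ U = k + 1)
    (hXU : X ≤ U) (hXk : finrank ℂ X = k) (hYU : Y ≤ U) (hYk : finrank ℂ Y = k)
    (hne : X ≠ Y) (hc : Compatible X Y) : (Xᗮ ⊓ U) ⟂ (Yᗮ ⊓ U) := by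
  obtain ⟨X', Y', Z, o1, o2, o3, hX, hY⟩ := hc
  haveI : FiniteDimensional ℂ X := Submodule.finiteDimensional_of_le hXU
  haveI : FiniteDimensional ℂ Y := Submodule.finiteDimensional_of_le hYU
  haveI : FiniteDimensional ℂ (Xᗮ ⊓ U : Submodule ℂ H) :=
    Submodule.finiteDimensional_of_le inf_le_right
  haveI : FiniteDimensional ℂ (Yᗮ ⊓ U : Submodule ℂ H) :=
    Submodule.finiteDimensional_of_le inf_le_right
  have hY'Y : Y' ≤ Y := hY ▸ le_sup_left
  have hX'X : X' ≤ X := hX ▸ le_sup_left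
  have hY'X : Y' ⟂ X := by
    rw [hX, Submodule.isOrtho_sup_right]; exact ⟨o1.symm, o3⟩
  have hX'Y : X' ⟂ Y := by
    rw [hY, Submodule.isOrtho_sup_right]; exact ⟨o1, o2⟩
  have hY'le : Y' ≤ Xᗮ ⊓ U := le_inf hY'X.le (hY'Y.trans hYU)
  have hX'le : X' ≤ Yᗮ ⊓ U := le_inf hX'Y.le (hX'X.trans hXU)
  have hY'ne : Y' ≠ ⊥ := by
    rintro rfl
    have hYX : Y ≤ X := by
      rw [hY, hX, bot_sup_eq]; exact le_sup_right
    exact hne (Submodule.eq_of_le_of_finrank_eq hYX (hYk.trans hXk.symm)).symm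
  have hX'ne : X' ≠ ⊥ := by
    rintro rfl
    have hXY : X ≤ Y := by
      rw [hY, hX, bot_sup_eq]; exact le_sup_right
    exact hne (Submodule.eq_of_le_of_finrank_eq hXY (hXk.trans hYk.symm))
  haveI : FiniteDimensional ℂ Y' := Submodule.finiteDimensional_of_le hY'le
  haveI : FiniteDimensional ℂ X' := Submodule.finiteDimensional_of_le hX'le
  have hfrX : finrank ℂ (Xᗮ ⊓ U : Submodule ℂ H) = 1 := aux_fr_line hU hXU hXk
  have hfrY : finrank ℂ (Yᗮ ⊓ U : Submodule ℂ H) = 1 := aux_fr_line hU hYU hYk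
  have hY'fr : finrank ℂ Y' = 1 := by
    have h1 : finrank ℂ Y' ≤ 1 := hfrX ▸ Submodule.finrank_mono hY'le
    have h2 : finrank ℂ Y' ≠ 0 := fun h => hY'ne (Submodule.finrank_eq_zero.mp h)
    omega
  have hX'fr : finrank ℂ X' = 1 := by
    have h1 : finrank ℂ X' ≤ 1 := hfrY ▸ Submodule.finrank_mono hX'le
    have h2 : finrank ℂ X' ≠ 0 := fun h => hX'ne (Submodule.finrank_eq_zero.mp h)
    omega
  have eY' : Y' = Xᗮ ⊓ U := Submodule.eq_of_le_of_finrank_eq hY'le (hY'fr.trans hfrX.symm)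
  have eX' : X' = Yᗮ ⊓ U := Submodule.eq_of_le_of_finrank_eq hX'le (hX'fr.trans hfrY.symm)
  exact eX' ▸ eY' ▸ o1.symm

/-- Conversely, if the orthocomplements (within `U`) of two distinct hyperplanes of `U`
are orthogonal, the hyperplanes are compatible. -/
lemma ortho_compat {X Y : Submodule ℂ H} (hU : finrank ℂ U = k + 1)
    (hXU : X ≤ U) (hXk : finrank ℂ X = k) (hYU : Y ≤ U) (hYk : finrank ℂ Y = k)
    (hne : X ≠ Y) (ho : (Xᗮ ⊓ U) ⟂ (Yᗮ ⊓ U)) : Compatible X Y := by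
  haveI : FiniteDimensional ℂ X := Submodule.finiteDimensional_of_le hXU
  haveI : FiniteDimensional ℂ Y := Submodule.finiteDimensional_of_le hYU
  haveI : FiniteDimensional ℂ (X ⊔ Y : Submodule ℂ H) :=
    Submodule.finiteDimensional_of_le (sup_le hXU hYU)
  haveI : FiniteDimensional ℂ (X ⊓ Y : Submodule ℂ H) :=
    Submodule.finiteDimensional_of_le (inf_le_left.trans hXU)
  haveI : FiniteDimensional ℂ (Xᗮ ⊓ U : Submodule ℂ H) :=
    Submodule.finiteDimensional_of_le inf_le_right
  haveI : FiniteDimensional ℂ (Yᗮ ⊓ U : Submodule ℂ H) :=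
    Submodule.finiteDimensional_of_le inf_le_right
  have hfrX : finrank ℂ (Xᗮ ⊓ U : Submodule ℂ H) = 1 := aux_fr_line hU hXU hXk
  have hfrY : finrank ℂ (Yᗮ ⊓ U : Submodule ℂ H) = 1 := aux_fr_line hU hYU hYk
  -- dimension of the intersection
  have hXltsup : X < X ⊔ Y := by
    refine lt_of_le_of_ne le_sup_left fun h => hne ?_
    have hYX : Y ≤ X := le_sup_right.trans h.ge
    exact (Submodule.eq_of_le_of_finrank_eq hYX (hYk.trans hXk.symm)).symm
  have hfrsup : finrank ℂ (X ⊔ Y : Submodule ℂ H) = k + 1 := by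
    have h1 : finrank ℂ X < finrank ℂ (X ⊔ Y : Submodule ℂ H) :=
      Submodule.finrank_lt_finrank_of_lt hXltsup
    have h2 : finrank ℂ (X ⊔ Y : Submodule ℂ H) ≤ finrank ℂ U :=
      Submodule.finrank_mono (sup_le hXU hYU)
    omega
  have hfrinf : finrank ℂ (X ⊓ Y : Submodule ℂ H) + 1 = k := by
    have := Submodule.finrank_sup_add_finrank_inf_eq X Y
    omega
  -- orthogonality facts
  have hoYZ : (Yᗮ ⊓ U) ⟂ (X ⊓ Y) := by
    rw [Submodule.isOrtho_iff_le]
    exact inf_le_left.trans (Submodule.orthogonal_le inf_le_right)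
  have hoXZ : (Xᗮ ⊓ U) ⟂ (X ⊓ Y) := by
    rw [Submodule.isOrtho_iff_le]
    exact inf_le_left.trans (Submodule.orthogonal_le inf_le_left)
  -- reconstruction of X and Y
  have hXeq : X = (Yᗮ ⊓ U) ⊔ (X ⊓ Y) := by
    have hle : (Yᗮ ⊓ U) ⊔ (X ⊓ Y) ≤ X := by
      refine sup_le ?_ inf_le_left
      have h1 : Yᗮ ⊓ U ≤ (Xᗮ ⊓ U)ᗮ := ho.symm.le
      have := aux_double hXU
      exact this ▸ le_inf h1 inf_le_right
    have hfr : finrank ℂ ((Yᗮ ⊓ U) ⊔ (X ⊓ Y) : Submodule ℂ H) = k := by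
      have hd := Submodule.finrank_sup_add_finrank_inf_eq (Yᗮ ⊓ U) (X ⊓ Y)
      rw [hoYZ.disjoint.eq_bot, finrank_bot] at hd
      omega
    exact (Submodule.eq_of_le_of_finrank_eq hle (hfr.trans hXk.symm)).symm
  have hYeq : Y = (Xᗮ ⊓ U) ⊔ (X ⊓ Y) := by
    have hle : (Xᗮ ⊓ U) ⊔ (X ⊓ Y) ≤ Y := by
      refine sup_le ?_ inf_le_right
      have h1 : Xᗮ ⊓ U ≤ (Yᗮ ⊓ U)ᗮ := ho.le
      have := aux_double hYU
      exact this ▸ le_inf h1 inf_le_right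
    have hfr : finrank ℂ ((Xᗮ ⊓ U) ⊔ (X ⊓ Y) : Submodule ℂ H) = k := by
      have hd := Submodule.finrank_sup_add_finrank_inf_eq (Xᗮ ⊓ U) (X ⊓ Y)
      rw [hoXZ.disjoint.eq_bot, finrank_bot] at hd
      omega
    exact (Submodule.eq_of_le_of_finrank_eq hle (hfr.trans hYk.symm)).symm
  exact ⟨Yᗮ ⊓ U, Xᗮ ⊓ U, X ⊓ Y, ho.symm, hoYZ, hoXZ, hXeq, hYeq⟩

end Aux

theorem stmt_7 {H : Type*} [NormedAddCommGroup H] [InnerProductSpace ℂ H] [CompleteSpace H]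
    {k : ℕ} (U : Submodule ℂ H) (hU : Module.finrank ℂ U = k + 1)
    (M : Set (Submodule ℂ H))
    (hMtop : ∀ X ∈ M, X ≤ U ∧ Module.finrank ℂ X = k)
    (hMcomp : CompatibleSet M)
    (hmax : ∀ M' : Set (Submodule ℂ H),
      (∀ X ∈ M', X ≤ U ∧ Module.finrank ℂ X = k) → CompatibleSet M' → M ⊆ M' → M' = M) :
    M.ncard = k + 1 := by
  classical
  haveI : FiniteDimensional ℂ U := FiniteDimensional.of_finrank_pos (by omega)
  -- choose a unit vector in the orthocomplement (within U) of each member of M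
  have hvex : ∀ X ∈ M, ∃ v : H, v ∈ (Xᗮ ⊓ U : Submodule ℂ H) ∧ ‖v‖ = 1 := by
    intro X hX
    obtain ⟨hXU, hXk⟩ := hMtop X hX
    have hfr : Module.finrank ℂ (Xᗮ ⊓ U : Submodule ℂ H) = 1 := aux_fr_line hU hXU hXk
    have hne : (Xᗮ ⊓ U : Submodule ℂ H) ≠ ⊥ := by
      intro h
      rw [h, finrank_bot] at hfr
      omega
    obtain ⟨x, hx, hx0⟩ := Submodule.exists_mem_ne_zero_of_ne_bot hne
    refine ⟨((‖x‖ : ℂ)⁻¹) • x, Submodule.smul_mem _ _ hx, ?_⟩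
    have h1 : ‖x‖ ≠ 0 := norm_ne_zero_iff.mpr hx0
    rw [norm_smul]
    simp [h1]
  let v : M → H := fun X => (hvex X.1 X.2).choose
  have hvmem : ∀ X : M, v X ∈ ((X : Submodule ℂ H)ᗮ ⊓ U : Submodule ℂ H) :=
    fun X => (hvex X.1 X.2).choose_spec.1
  have hvnorm : ∀ X : M, ‖v X‖ = 1 := fun X => (hvex X.1 X.2).choose_spec.2
  have hvU : ∀ X : M, v X ∈ U := fun X => (hvmem X).2
  have hvne : ∀ X : M, v X ≠ 0 := fun X => by
    intro h; have := hvnorm X; rw [h, norm_zero] at this; norm_num at this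
  -- orthonormality
  have hortho : ∀ X Y : M, X ≠ Y →
      ((X : Submodule ℂ H)ᗮ ⊓ U) ⟂ ((Y : Submodule ℂ H)ᗮ ⊓ U) := by
    intro X Y hne
    have hne' : (X : Submodule ℂ H) ≠ (Y : Submodule ℂ H) := fun h => hne (Subtype.ext h)
    obtain ⟨hXU, hXk⟩ := hMtop X.1 X.2
    obtain ⟨hYU, hYk⟩ := hMtop Y.1 Y.2
    exact compat_ortho hU hXU hXk hYU hYk hne' (hMcomp X.1 X.2 Y.1 Y.2 hne')
  have hON : Orthonormal ℂ v := by
    constructor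
    · exact hvnorm
    · intro X Y hne
      exact (hortho X Y hne).inner_eq (hvmem X) (hvmem Y)
  -- linear independence transferred into U
  let w : M → U := fun X => ⟨v X, hvU X⟩
  have hw : LinearIndependent ℂ w := by
    have h := hON.linearIndependent
    exact LinearIndependent.of_comp U.subtype (by exact h)
  haveI : Finite ↥M := hw.finite
  haveI : Fintype ↥M := Fintype.ofFinite _
  have hcard_le : Fintype.card ↥M ≤ k + 1 := by
    have := hw.fintype_card_le_finrank
    rwa [hU] at this
  -- lower bound via maximality
  have hcard_ge : k + 1 ≤ Fintype.card ↥M := by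
    by_contra hlt
    push_neg at hlt
    have hcardk : Fintype.card ↥M ≤ k := by omega
    -- span of the chosen vectors
    set W : Submodule ℂ H := Submodule.span ℂ (Set.range v) with hW
    have hWU : W ≤ U := Submodule.span_le.mpr (by rintro _ ⟨X, rfl⟩; exact hvU X)
    haveI : FiniteDimensional ℂ W := Submodule.finiteDimensional_of_le hWU
    have hfrW : Module.finrank ℂ W ≤ k := by
      have h1 : Module.finrank ℂ W ≤ (Set.range v).toFinset.card :=
        finrank_span_le_card (Set.range v)
      have h2 : (Set.range v).toFinset.card ≤ Fintype.card ↥M := by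
        rw [Set.toFinset_card]
        exact Fintype.card_range_le v
      omega
    -- a unit direction orthogonal to everything
    have hfrWo : 1 ≤ Module.finrank ℂ (Wᗮ ⊓ U : Submodule ℂ H) := by
      have := Submodule.finrank_add_inf_finrank_orthogonal hWU
      omega
    have hWone : (Wᗮ ⊓ U : Submodule ℂ H) ≠ ⊥ := by
      intro h; rw [h, finrank_bot] at hfrWo; omega
    obtain ⟨u, hu, hu0⟩ := Submodule.exists_mem_ne_zero_of_ne_bot hWone
    set Lnew : Submodule ℂ H := Submodule.span ℂ {u} with hLnew
    have hLnewle : Lnew ≤ Wᗮ ⊓ U := Submodule.span_le.mpr (Set.singleton_subset_iff.mpr hu)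
    have hLnewU : Lnew ≤ U := hLnewle.trans inf_le_right
    have hLnewfr : Module.finrank ℂ Lnew = 1 := finrank_span_singleton hu0
    set X₀ : Submodule ℂ H := Lnewᗮ ⊓ U with hX₀
    have hX₀U : X₀ ≤ U := inf_le_right
    have hX₀fr : Module.finrank ℂ X₀ = k := by
      have h := Submodule.finrank_add_inf_finrank_orthogonal hLnewU
      rw [← hX₀] at h
      omega
    have hLX₀ : (X₀ᗮ ⊓ U : Submodule ℂ H) = Lnew := by
      rw [hX₀]; exact aux_double hLnewU
    -- each old line is contained in W
    have hLXW : ∀ X : M, ((X : Submodule ℂ H)ᗮ ⊓ U : Submodule ℂ H) ≤ W := by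
      intro X
      obtain ⟨hXU, hXk⟩ := hMtop X.1 X.2
      have hfr : Module.finrank ℂ ((X : Submodule ℂ H)ᗮ ⊓ U : Submodule ℂ H) = 1 :=
        aux_fr_line hU hXU hXk
      have hsp : Submodule.span ℂ {v X} ≤ ((X : Submodule ℂ H)ᗮ ⊓ U : Submodule ℂ H) :=
        Submodule.span_le.mpr (Set.singleton_subset_iff.mpr (hvmem X))
      haveI : FiniteDimensional ℂ (((X : Submodule ℂ H)ᗮ ⊓ U : Submodule ℂ H)) :=
        Submodule.finiteDimensional_of_le inf_le_right
      have heq : Submodule.span ℂ {v X} = ((X : Submodule ℂ H)ᗮ ⊓ U : Submodule ℂ H) :=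
        Submodule.eq_of_le_of_finrank_eq hsp (by rw [finrank_span_singleton (hvne X), hfr])
      rw [← heq]
      exact Submodule.span_le.mpr (Set.singleton_subset_iff.mpr
        (Submodule.subset_span (Set.mem_range_self X)))
    -- X₀ is new
    have hX₀notM : X₀ ∉ M := by
      intro hmem
      have h1 : v ⟨X₀, hmem⟩ ∈ W := Submodule.subset_span (Set.mem_range_self _)
      have h2 : v ⟨X₀, hmem⟩ ∈ Wᗮ := by
        have := hvmem ⟨X₀, hmem⟩
        rw [hLX₀] at this
        exact (hLnewle.trans inf_le_left) this
      have : v ⟨X₀, hmem⟩ = 0 := by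
        have h3 := (Submodule.mem_orthogonal _ _).mp h2 _ h1
        exact inner_self_eq_zero.mp h3
      exact hvne _ this
    -- X₀ is compatible with everything in M
    have hX₀compat : ∀ X ∈ M, Compatible X₀ X ∧ Compatible X X₀ := by
      intro X hX
      obtain ⟨hXU, hXk⟩ := hMtop X hX
      have hne' : X₀ ≠ X := fun h => hX₀notM (h ▸ hX)
      have ho : (X₀ᗮ ⊓ U) ⟂ (Xᗮ ⊓ U) := by
        rw [hLX₀, Submodule.isOrtho_iff_le]
        exact (hLnewle.trans inf_le_left).trans (Submodule.orthogonal_le (hLXW ⟨X, hX⟩))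
      exact ⟨ortho_compat hU hX₀U hX₀fr hXU hXk hne' ho,
        ortho_compat hU hXU hXk hX₀U hX₀fr hne'.symm ho.symm⟩
    -- contradiction with maximality
    have hM' : insert X₀ M = M := by
      apply hmax
      · intro X hX
        rcases hX with rfl | hX
        · exact ⟨hX₀U, hX₀fr⟩
        · exact hMtop X hX
      · intro X hX Y hY hne
        rcases hX with rfl | hX
        · rcases hY with rfl | hY
          · exact absurd rfl hne
          · exact (hX₀compat Y hY).1
        · rcases hY with rfl | hY
          · exact (hX₀compat X hX).2
          · exact hMcomp X hX Y hY hne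
      · exact Set.subset_insert _ _
    exact hX₀notM (hM' ▸ Set.mem_insert X₀ M)
  have : Fintype.card ↥M = k + 1 := le_antisymm hcard_le hcard_ge
  rw [Set.ncard_eq_toFinset_card' M, Set.toFinset_card, this]
end

section
/- If dim H = n is finite, every maximal compatible subset of a star [S⟩_k in the Grassmannian G_k(H) contains precisely n−k+1 elements. -/
/-!
A member `X` of the star of `S` is determined by its line `Sᗮ ⊓ X`, since `X = (Sᗮ ⊓ X) ⊔ S`.
In a compatible pair `X = X' ⊔ Z`, `Y = Y' ⊔ Z` the common part is forced to be `Z = X ⊓ Y`, which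
is `S` for distinct members of the star, so distinct members are compatible exactly when their
lines are orthogonal. A compatible subset of the star is therefore a family of pairwise orthogonal
lines in `Sᗮ`, and its size is the dimension of their span. If that span were smaller than `Sᗮ`,
a vector of `Sᗮ` orthogonal to it would give a new member compatible with all the others, so for a
maximal subset the span is `Sᗮ`, of dimension `n - k + 1`.
-/

open Module Submodule

namespace Submodule

variable {K V : Type*} [DivisionRing K] [AddCommGroup V] [Module K V]

theorem exists_ne_zero_span_singleton_eq_of_finrank_eq_one {L : Submodule K V}
    (h : finrank K L = 1) : ∃ v ≠ 0, K ∙ v = L := by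
  have : Module.Finite K L := Module.finite_of_finrank_eq_succ h
  obtain ⟨v, hvL, hv0⟩ := exists_mem_ne_zero_of_ne_bot (p := L) (by rintro rfl; simp at h)
  refine ⟨v, hv0, eq_of_le_of_finrank_eq ((span_singleton_le_iff_mem v L).2 hvL) ?_⟩
  rw [finrank_span_singleton hv0, h]

variable {𝕜 E : Type*} [RCLike 𝕜] [NormedAddCommGroup E] [InnerProductSpace 𝕜 E]

theorem sup_inf_sup_eq_of_isOrtho {X Y Z : Submodule 𝕜 E} (hXY : X ⟂ Y) (hYZ : Y ⟂ Z) :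
    (X ⊔ Z) ⊓ (Y ⊔ Z) = Z := by
  have hdisj : Disjoint Y (X ⊔ Z) := (isOrtho_sup_right.2 ⟨hXY.symm, hYZ⟩).disjoint
  rw [inf_comm, sup_comm Y, sup_inf_assoc_of_le Y le_sup_right, hdisj.eq_bot, sup_bot_eq]

theorem orthogonal_inf_sup_eq {S X : Submodule 𝕜 E} (hX : X ≤ Sᗮ) : Sᗮ ⊓ (X ⊔ S) = X := by
  rw [inf_comm, sup_inf_assoc_of_le S hX, inf_orthogonal_eq_bot, sup_bot_eq]

theorem card_eq_finrank_iSup_of_pairwise_isOrtho [FiniteDimensional 𝕜 E] {ι : Type*}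
    {L : ι → Submodule 𝕜 E} (hL : ∀ i, finrank 𝕜 (L i) = 1)
    (hortho : Pairwise fun i j => L i ⟂ L j) : Nat.card ι = finrank 𝕜 ↥(⨆ i, L i) := by
  choose v hv0 hvL using fun i => exists_ne_zero_span_singleton_eq_of_finrank_eq_one (hL i)
  have hv : LinearIndependent 𝕜 v := linearIndependent_of_ne_zero_of_inner_eq_zero hv0
    fun i j hij => (hortho hij).inner_eq (hvL i ▸ mem_span_singleton_self _)
      (hvL j ▸ mem_span_singleton_self _)
  have : Fintype ι := @Fintype.ofFinite _ hv.finite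
  rw [← funext hvL, ← span_range_eq_iSup, finrank_span_eq_card hv, Nat.card_eq_fintype_card]

end Submodule

section Compatibility

variable {H : Type*} [NormedAddCommGroup H] [InnerProductSpace ℂ H]

/-- The star `[S⟩_k` with `k = dim S + 1`. -/
def starOf (S : Submodule ℂ H) : Set (Submodule ℂ H) :=
  {X | S ≤ X ∧ finrank ℂ X = finrank ℂ S + 1}

theorem Compatible.symm {X Y : Submodule ℂ H} (h : Compatible X Y) : Compatible Y X := by
  obtain ⟨X', Y', Z, hXY, hXZ, hYZ, rfl, rfl⟩ := h
  exact ⟨Y', X', Z, hXY.symm, hYZ, hXZ, rfl, rfl⟩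

theorem compatible_sup_of_isOrtho {S L₁ L₂ : Submodule ℂ H} (h₁ : L₁ ≤ Sᗮ) (h₂ : L₂ ≤ Sᗮ)
    (h : L₁ ⟂ L₂) : Compatible (L₁ ⊔ S) (L₂ ⊔ S) :=
  ⟨L₁, L₂, S, h, isOrtho_iff_le.2 h₁, isOrtho_iff_le.2 h₂, rfl, rfl⟩

theorem Compatible.isOrtho_orthogonal_inf {X Y : Submodule ℂ H} (h : Compatible X Y) :
    (X ⊓ Y)ᗮ ⊓ X ⟂ (X ⊓ Y)ᗮ ⊓ Y := by
  obtain ⟨X', Y', Z, hXY, hXZ, hYZ, rfl, rfl⟩ := h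
  rw [sup_inf_sup_eq_of_isOrtho hXY hYZ, orthogonal_inf_sup_eq (isOrtho_iff_le.1 hXZ),
    orthogonal_inf_sup_eq (isOrtho_iff_le.1 hYZ)]
  exact hXY

theorem CompatibleSet.insert {M : Set (Submodule ℂ H)} {X₀ : Submodule ℂ H}
    (hM : CompatibleSet M) (h : ∀ X ∈ M, X₀ ≠ X → Compatible X₀ X) :
    CompatibleSet (insert X₀ M) := by
  rintro X (rfl | hX) Y (rfl | hY) hXY
  · exact absurd rfl hXY
  · exact h Y hY hXY
  · exact (h X hX hXY.symm).symm
  · exact hM X hX Y hY hXY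

end Compatibility

section Star

variable {H : Type*} [NormedAddCommGroup H] [InnerProductSpace ℂ H] [FiniteDimensional ℂ H]

theorem finrank_orthogonal_inf_of_mem_starOf {S X : Submodule ℂ H} (hX : X ∈ starOf S) :
    finrank ℂ ↥(Sᗮ ⊓ X) = 1 :=
  finrank_add_inf_finrank_orthogonal' hX.1 hX.2.symm

theorem inf_eq_of_mem_starOf {S X Y : Submodule ℂ H} (hX : X ∈ starOf S) (hY : Y ∈ starOf S)
    (hXY : X ≠ Y) : X ⊓ Y = S := by
  have hlt : X ⊓ Y < X := inf_le_left.lt_of_ne fun h => hXY <|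
    eq_of_le_of_finrank_eq (h ▸ inf_le_right) (hX.2.trans hY.2.symm)
  have h₁ := finrank_lt_finrank_of_lt hlt
  have h₂ := finrank_mono (le_inf hX.1 hY.1)
  have h₃ := hX.2
  exact (eq_of_le_of_finrank_eq (le_inf hX.1 hY.1) (by omega)).symm

theorem CompatibleSet.pairwise_isOrtho_of_subset_starOf {S : Submodule ℂ H}
    {M : Set (Submodule ℂ H)} (hM : M ⊆ starOf S) (hc : CompatibleSet M) :
    Pairwise fun X Y : M => Sᗮ ⊓ (X : Submodule ℂ H) ⟂ Sᗮ ⊓ (Y : Submodule ℂ H) := by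
  rintro ⟨X, hX⟩ ⟨Y, hY⟩ hXY
  have hne : X ≠ Y := fun h => hXY (Subtype.ext h)
  simpa only [inf_eq_of_mem_starOf (hM hX) (hM hY) hne] using
    (hc X hX Y hY hne).isOrtho_orthogonal_inf

theorem iSup_orthogonal_inf_eq_of_maximal {S : Submodule ℂ H} {M : Set (Submodule ℂ H)}
    (hM : M ⊆ starOf S) (hc : CompatibleSet M)
    (hmax : ∀ M' ⊆ starOf S, CompatibleSet M' → M ⊆ M' → M' = M) :
    ⨆ X : M, Sᗮ ⊓ (X : Submodule ℂ H) = Sᗮ := by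
  set T := ⨆ X : M, Sᗮ ⊓ (X : Submodule ℂ H)
  have hTS : T ≤ Sᗮ := iSup_le fun _ => inf_le_left
  have hlineT (X : M) : Sᗮ ⊓ (X : Submodule ℂ H) ≤ T := le_iSup (fun X : M => Sᗮ ⊓ X.1) X
  suffices Tᗮ ⊓ Sᗮ = ⊥ by
    rw [← sup_orthogonal_inf_of_hasOrthogonalProjection hTS, this, sup_bot_eq]
  refine (Submodule.eq_bot_iff _).2 fun v ⟨hvT, hvS⟩ => by_contra fun hv0 => ?_
  have hvS' : ℂ ∙ v ≤ Sᗮ := (span_singleton_le_iff_mem v _).2 hvS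
  set X₀ := (ℂ ∙ v) ⊔ S
  have hline : Sᗮ ⊓ X₀ = ℂ ∙ v := orthogonal_inf_sup_eq hvS'
  have hX₀ : X₀ ∈ starOf S := by
    refine ⟨le_sup_right, ?_⟩
    rw [← finrank_add_inf_finrank_orthogonal (le_sup_right : S ≤ X₀), hline,
      finrank_span_singleton hv0]
  have hcomp : CompatibleSet (insert X₀ M) := hc.insert fun X hX _ => by
    rw [← sup_orthogonal_inf_of_hasOrthogonalProjection (hM hX).1, sup_comm S]
    refine compatible_sup_of_isOrtho hvS' inf_le_left ?_
    exact isOrtho_iff_le.2 ((span_singleton_le_iff_mem v _).2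
      (orthogonal_le (hlineT ⟨X, hX⟩) hvT))
  have hX₀M : X₀ ∈ M := hmax _ (Set.insert_subset hX₀ hM) hcomp (Set.subset_insert _ _) ▸
    Set.mem_insert X₀ M
  have hvT' : v ∈ T := hlineT ⟨X₀, hX₀M⟩ (hline ▸ mem_span_singleton_self v)
  exact hv0 ((orthogonal_disjoint T).le_bot ⟨hvT', hvT⟩)

end Star

theorem stmt_8 {H : Type*} [NormedAddCommGroup H] [InnerProductSpace ℂ H]
    [FiniteDimensional ℂ H] {n k : ℕ} (hn : Module.finrank ℂ H = n)
    (hk1 : 1 ≤ k) (hkn : k ≤ n)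
    (S : Submodule ℂ H) (hS : Module.finrank ℂ S = k - 1)
    (M : Set (Submodule ℂ H))
    (hMstar : ∀ X ∈ M, S ≤ X ∧ Module.finrank ℂ X = k)
    (hMcomp : CompatibleSet M)
    (hmax : ∀ M' : Set (Submodule ℂ H),
      (∀ X ∈ M', S ≤ X ∧ Module.finrank ℂ X = k) → CompatibleSet M' → M ⊆ M' → M' = M) :
    M.ncard = n - k + 1 := by
  obtain rfl : k = finrank ℂ S + 1 := by omega
  have hlines : ∀ X : M, finrank ℂ ↥(Sᗮ ⊓ (X : Submodule ℂ H)) = 1 := fun X =>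
    finrank_orthogonal_inf_of_mem_starOf (hMstar X X.2)
  rw [← Nat.card_coe_set_eq, card_eq_finrank_iSup_of_pairwise_isOrtho hlines
    (hMcomp.pairwise_isOrtho_of_subset_starOf hMstar),
    iSup_orthogonal_inf_eq_of_maximal hMstar hMcomp hmax]
  have := S.finrank_add_finrank_orthogonal
  omega
end

section
/- If X and Y are orthogonal k-dimensional subspaces of a complex Hilbert space and X = X_0, X_1, …, X_k = Y is a geodesic in the Grassmann graph Γ_k(H), then every X_j is the orthogonal direct sum of X ∩ X_j and Y ∩ X_j; consequently every X_j is compatible with both X and Y. -/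
/-!
Along a walk in `Γ_k(H)` the dimension of `W ⊓ X_i` drops by at most one per step, for any fixed
subspace `W`. A geodesic of length `k` from `X` to `Y` therefore forces
`dim (X ⊓ X_j) ≥ k - j` and `dim (Y ⊓ X_j) ≥ j`. Since `X ⟂ Y`, these two subspaces of the
`k`-dimensional `X_j` are independent, so they span it. Compatibility with `X` is then witnessed by
`Z = X ⊓ X_j`, the remaining parts being `Y ⊓ X_j` and the orthogonal complement of `Z` in `X`.
-/

/-- The Grassmann graph on the `k`-dimensional subspaces of `H`: two distinct
`k`-dimensional subspaces are adjacent iff their intersection has dimension `k-1`. -/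
def GrassmannGraph (H : Type*) [NormedAddCommGroup H] [InnerProductSpace ℂ H] (k : ℕ) :
    SimpleGraph {X : Submodule ℂ H // Module.finrank ℂ ↥X = k} where
  Adj X Y := Module.finrank ℂ ↥(X.1 ⊓ Y.1) = k - 1 ∧ X ≠ Y
  symm := by
    constructor
    intro X Y h
    refine ⟨?_, h.2.symm⟩
    rw [inf_comm]
    exact h.1
  loopless := ⟨fun X h => h.2 rfl⟩

open Module

namespace SimpleGraph.Walk

variable {V : Type*} {G : SimpleGraph V}

theorem le_apply_getVert_add {f : V → ℕ} (hf : ∀ u v, G.Adj u v → f u ≤ f v + 1)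
    {u w : V} (p : G.Walk u w) (j : ℕ) : f u ≤ f (p.getVert j) + j := by
  induction p generalizing j with
  | nil => exact Nat.le_add_right _ _
  | @cons u v w h q ih =>
    cases j with
    | zero => exact Nat.le_add_right _ _
    | succ j =>
      rw [getVert_cons_succ]
      have := hf u v h
      have := ih j
      omega

end SimpleGraph.Walk

namespace Submodule

variable {K V : Type*} [DivisionRing K] [AddCommGroup V] [Module K V]

theorem finrank_inf_add_finrank_inf_le (W A B : Submodule K V) [FiniteDimensional K A]
    [FiniteDimensional K B] :
    finrank K ↥(W ⊓ A) + finrank K ↥(A ⊓ B) ≤ finrank K ↥(W ⊓ B) + finrank K A := by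
  have hsup : finrank K ↥((W ⊓ A) ⊔ (A ⊓ B)) ≤ finrank K A :=
    finrank_mono (sup_le inf_le_right inf_le_left)
  have hinf : finrank K ↥((W ⊓ A) ⊓ (A ⊓ B)) ≤ finrank K ↥(W ⊓ B) :=
    finrank_mono (le_inf (inf_le_left.trans inf_le_left) (inf_le_right.trans inf_le_right))
  have := finrank_sup_add_finrank_inf_eq (W ⊓ A) (A ⊓ B)
  omega

theorem sup_eq_of_disjoint_of_finrank_le {U U' S : Submodule K V} [FiniteDimensional K S]
    (hU : U ≤ S) (hU' : U' ≤ S) (hdisj : Disjoint U U')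
    (hrank : finrank K S ≤ finrank K U + finrank K U') : U ⊔ U' = S := by
  have : FiniteDimensional K U := finiteDimensional_of_le hU
  have : FiniteDimensional K U' := finiteDimensional_of_le hU'
  refine eq_of_le_of_finrank_le (sup_le hU hU') ?_
  have := finrank_sup_add_finrank_inf_eq U U'
  rw [disjoint_iff.mp hdisj, finrank_bot] at this
  omega

end Submodule

section Compatible

variable {H : Type*} [NormedAddCommGroup H] [InnerProductSpace ℂ H]

theorem compatible_self (A : Submodule ℂ H) : Compatible A A :=
  ⟨⊥, ⊥, A, Submodule.isOrtho_bot_left, Submodule.isOrtho_bot_left, Submodule.isOrtho_bot_left,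
    by simp, by simp⟩

theorem compatible_of_sup_inf_eq {A X Y : Submodule ℂ H} (hXY : X ⟂ Y)
    (hA : (A ⊓ X) ⊔ (A ⊓ Y) = A) [(A ⊓ X).HasOrthogonalProjection] : Compatible A X := by
  refine ⟨A ⊓ Y, (A ⊓ X)ᗮ ⊓ X, A ⊓ X, hXY.symm.mono inf_le_right inf_le_right,
    hXY.symm.mono inf_le_right inf_le_right, Submodule.isOrtho_iff_le.mpr inf_le_left, ?_, ?_⟩
  · rw [sup_comm, hA]
  · rw [sup_comm, Submodule.sup_orthogonal_inf_of_hasOrthogonalProjection inf_le_right]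

end Compatible

namespace GrassmannGraph

variable {H : Type*} [NormedAddCommGroup H] [InnerProductSpace ℂ H] {k : ℕ}

theorem finiteDimensional (hk : 0 < k) (A : {X : Submodule ℂ H // finrank ℂ ↥X = k}) :
    FiniteDimensional ℂ A.1 :=
  Module.finite_of_finrank_pos (by rw [A.2]; exact hk)

theorem finrank_inf_le_of_adj (hk : 0 < k) {A B : {X : Submodule ℂ H // finrank ℂ ↥X = k}}
    (h : (GrassmannGraph H k).Adj A B) (W : Submodule ℂ H) :
    finrank ℂ ↥(W ⊓ A.1) ≤ finrank ℂ ↥(W ⊓ B.1) + 1 := by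
  have := finiteDimensional hk A
  have := finiteDimensional hk B
  have := Submodule.finrank_inf_add_finrank_inf_le W A.1 B.1
  rw [h.1, A.2] at this
  omega

theorem finrank_inf_le_getVert (hk : 0 < k) {A B : {X : Submodule ℂ H // finrank ℂ ↥X = k}}
    (p : (GrassmannGraph H k).Walk A B) (W : Submodule ℂ H) (j : ℕ) :
    finrank ℂ ↥(W ⊓ A.1) ≤ finrank ℂ ↥(W ⊓ (p.getVert j).1) + j :=
  p.le_apply_getVert_add (fun _ _ h => finrank_inf_le_of_adj hk h W) j

end GrassmannGraph

theorem stmt_12 {H : Type*} [NormedAddCommGroup H] [InnerProductSpace ℂ H] {k : ℕ}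
    (X Y : {X : Submodule ℂ H // Module.finrank ℂ ↥X = k})
    (hXY : X.1 ⟂ Y.1)
    (p : (GrassmannGraph H k).Walk X Y) (hp : p.length = k) :
    ∀ j ≤ k,
      (X.1 ⊓ (p.getVert j).1) ⟂ (Y.1 ⊓ (p.getVert j).1) ∧
      (X.1 ⊓ (p.getVert j).1) ⊔ (Y.1 ⊓ (p.getVert j).1) = (p.getVert j).1 ∧
      Compatible (p.getVert j).1 X.1 ∧ Compatible (p.getVert j).1 Y.1 := by
  intro j hj
  have hortho : (X.1 ⊓ (p.getVert j).1) ⟂ (Y.1 ⊓ (p.getVert j).1) :=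
    hXY.mono inf_le_left inf_le_left
  -- `finrank = 0` holds for infinite-dimensional subspaces too, so `k = 0` is treated apart.
  rcases Nat.eq_zero_or_pos k with rfl | hk
  · obtain rfl : j = 0 := Nat.le_zero.mp hj
    obtain rfl := p.eq_of_length_eq_zero hp
    rw [p.getVert_zero, inf_idem, sup_idem]
    exact ⟨hXY, rfl, compatible_self X.1, compatible_self X.1⟩
  have := GrassmannGraph.finiteDimensional hk (p.getVert j)
  have hX : k ≤ finrank ℂ ↥(X.1 ⊓ (p.getVert j).1) + j := by
    have := GrassmannGraph.finrank_inf_le_getVert hk p X.1 j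
    rwa [inf_idem, X.2] at this
  have hY : k ≤ finrank ℂ ↥(Y.1 ⊓ (p.getVert j).1) + (k - j) := by
    have := GrassmannGraph.finrank_inf_le_getVert hk p.reverse Y.1 (k - j)
    rwa [inf_idem, Y.2, p.getVert_reverse, hp, Nat.sub_sub_self hj] at this
  have hsup : (X.1 ⊓ (p.getVert j).1) ⊔ (Y.1 ⊓ (p.getVert j).1) = (p.getVert j).1 :=
    Submodule.sup_eq_of_disjoint_of_finrank_le inf_le_right inf_le_right hortho.disjoint
      (by rw [(p.getVert j).2]; omega)
  refine ⟨hortho, hsup, ?_, ?_⟩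
  · exact compatible_of_sup_inf_eq hXY (by rwa [inf_comm _ X.1, inf_comm _ Y.1])
  · exact compatible_of_sup_inf_eq hXY.symm (by rwa [inf_comm _ X.1, inf_comm _ Y.1, sup_comm])
end

section
/- Let dim H > 2k > 2 and let f : G_k(H) → G_k(H) be an injective, orthogonality preserving and ortho-adjacency preserving map. Then f is adjacency preserving. -/
/-!
Let `X`, `Y` be adjacent and `Z = X ⊓ Y`. If `dim H = 2k + 1`, the `k`-space `V = (X ⊔ Y)ᗮ` is
orthogonal to `X` and `Y`, so `f X` and `f Y` lie in the `(k + 1)`-space `(f V)ᗮ`; being distinct,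
they are adjacent.

Otherwise there are three mutually orthogonal lines `Lᵢ ⟂ X ⊔ Y`, and each `Wᵢ = Lᵢ ⊔ Z` is
ortho-adjacent to `X`, to `Y` and to the other `Wⱼ`. So `A = f X`, `B = f Y` are both adjacent
to a triangle `C₁, C₂, C₃` of pairwise ortho-adjacent spaces. A space adjacent to `C₁` and `C₂`
either contains `D = C₁ ⊓ C₂` or lies in `P = C₁ ⊔ C₂`; if `A` and `B` do the same, they are
adjacent. The mixed case (`D ≤ A`, `B ≤ P`) forces `D ≤ B`: compatibility gives `A ⊓ P = D`,
hence `D ≤ C₃`; if `C₃ ≤ P`, the parts of `C₁, C₂, C₃` orthogonal to `D` would be three mutually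
orthogonal lines in the plane `P ⊓ Dᗮ`, and otherwise `B ⊓ C₃ = B ⊓ D` has dimension `k - 1`.
-/

open Module

namespace Submodule

section DivisionRing

variable {K V : Type*} [DivisionRing K] [AddCommGroup V] [Module K V] {k : ℕ}

theorem finrank_inf_lt_of_ne {A B : Submodule K V} [FiniteDimensional K A] [FiniteDimensional K B]
    (hA : finrank K A = k) (hB : finrank K B = k) (hAB : A ≠ B) : finrank K ↥(A ⊓ B) < k := by
  by_contra! h
  have hA' : A ⊓ B = A := eq_of_le_of_finrank_le inf_le_left (by omega)
  have hB' : A ⊓ B = B := eq_of_le_of_finrank_le inf_le_right (by omega)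
  exact hAB (hA'.symm.trans hB')

theorem finrank_inf_eq_pred_of_le_inf {A B D : Submodule K V} [FiniteDimensional K A]
    [FiniteDimensional K B] (hA : finrank K A = k) (hB : finrank K B = k) (hAB : A ≠ B)
    (hD : D ≤ A ⊓ B) (hDk : finrank K D = k - 1) : finrank K ↥(A ⊓ B) = k - 1 := by
  have := finrank_mono hD
  have := finrank_inf_lt_of_ne hA hB hAB
  omega

theorem finrank_inf_eq_pred_of_finrank_sup_le {A B : Submodule K V} [FiniteDimensional K A]
    [FiniteDimensional K B] (hA : finrank K A = k) (hB : finrank K B = k) (hAB : A ≠ B)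
    (hAB' : finrank K ↥(A ⊔ B) ≤ k + 1) : finrank K ↥(A ⊓ B) = k - 1 := by
  have := finrank_sup_add_finrank_inf_eq A B
  have := finrank_inf_lt_of_ne hA hB hAB
  omega

theorem inf_le_or_le_sup_of_finrank_inf {T C₁ C₂ : Submodule K V} [FiniteDimensional K T]
    [FiniteDimensional K C₁] (hT : finrank K T = k) (hT₁ : finrank K ↥(T ⊓ C₁) = k - 1)
    (hT₂ : finrank K ↥(T ⊓ C₂) = k - 1) (h₁₂ : finrank K ↥(C₁ ⊓ C₂) = k - 1) :
    C₁ ⊓ C₂ ≤ T ∨ T ≤ C₁ ⊔ C₂ := by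
  by_cases h : T ⊓ C₁ = T ⊓ C₂
  · left
    have : T ⊓ C₁ = C₁ ⊓ C₂ :=
      eq_of_le_of_finrank_le (le_inf inf_le_right (h ▸ inf_le_right)) (by omega)
    exact this ▸ inf_le_left
  · right
    have hlt : T ⊓ C₁ ⊓ (T ⊓ C₂) < T ⊓ C₁ := by
      refine inf_le_left.lt_of_ne fun h' => h ?_
      exact eq_of_le_of_finrank_le (h' ▸ inf_le_right) (by omega)
    have := finrank_lt_finrank_of_lt hlt
    have := finrank_sup_add_finrank_inf_eq (T ⊓ C₁) (T ⊓ C₂)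
    have hT' : T ⊓ C₁ ⊔ T ⊓ C₂ = T :=
      eq_of_le_of_finrank_le (sup_le inf_le_left inf_le_left) (by omega)
    rw [← hT']
    exact sup_le_sup inf_le_right inf_le_right

end DivisionRing

section InnerProductSpace

variable {𝕜 E : Type*} [RCLike 𝕜] [NormedAddCommGroup E] [InnerProductSpace 𝕜 E]

theorem IsOrtho.finrank_sup {U V : Submodule 𝕜 E} [FiniteDimensional 𝕜 U]
    [FiniteDimensional 𝕜 V] (h : U ⟂ V) : finrank 𝕜 ↥(U ⊔ V) = finrank 𝕜 U + finrank 𝕜 V := by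
  rw [← finrank_sup_add_finrank_inf_eq, h.disjoint.eq_bot, finrank_bot, add_zero]

theorem sup_inf_sup_eq_of_isOrtho_s16 {U V Z : Submodule 𝕜 E} (hUV : U ⟂ V) (hUZ : U ⟂ Z) :
    (U ⊔ Z) ⊓ (V ⊔ Z) = Z := by
  rw [sup_comm U, sup_inf_assoc_of_le U le_sup_right,
    (isOrtho_sup_right.2 ⟨hUV, hUZ⟩).disjoint.eq_bot, sup_bot_eq]

theorem finrank_orthogonal_sup_eq [FiniteDimensional 𝕜 E] {k : ℕ} {X Y : Submodule 𝕜 E}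
    (hE : finrank 𝕜 E = 2 * k + 1) (hk : 0 < k) (hX : finrank 𝕜 X = k) (hY : finrank 𝕜 Y = k)
    (hXY : finrank 𝕜 ↥(X ⊓ Y) = k - 1) : finrank 𝕜 ↥(X ⊔ Y)ᗮ = k := by
  have := finrank_sup_add_finrank_inf_eq X Y
  have := finrank_add_finrank_orthogonal (X ⊔ Y)
  omega

theorem finrank_inf_eq_pred_of_isOrtho [FiniteDimensional 𝕜 E] {k : ℕ} {A B C : Submodule 𝕜 E}
    (hE : finrank 𝕜 E = 2 * k + 1) (hA : finrank 𝕜 A = k) (hB : finrank 𝕜 B = k)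
    (hC : finrank 𝕜 C = k) (hAB : A ≠ B) (hAC : A ⟂ C) (hBC : B ⟂ C) :
    finrank 𝕜 ↥(A ⊓ B) = k - 1 := by
  have := finrank_add_finrank_orthogonal C
  exact finrank_inf_eq_pred_of_finrank_sup_le hA hB hAB
    ((finrank_mono (sup_le hAC hBC)).trans (by omega))

theorem exists_finrank_eq_one_isOrtho {S : Submodule 𝕜 E} [FiniteDimensional 𝕜 S]
    (h : (finrank 𝕜 S : Cardinal) < Module.rank 𝕜 E) :
    ∃ L : Submodule 𝕜 E, finrank 𝕜 L = 1 ∧ S ⟂ L := by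
  have hS : Sᗮ ≠ ⊥ := by
    rw [Ne, orthogonal_eq_bot_iff]
    rintro rfl
    rw [finrank_eq_rank, rank_top] at h
    exact h.false
  obtain ⟨w, hw, hw0⟩ := (Submodule.ne_bot_iff _).1 hS
  exact ⟨𝕜 ∙ w, finrank_span_singleton hw0,
    (isOrtho_orthogonal_right S).mono_right ((span_singleton_le_iff_mem _ _).2 hw)⟩

theorem exists_three_isOrtho_lines {S : Submodule 𝕜 E} [FiniteDimensional 𝕜 S]
    (h : ((finrank 𝕜 S + 3 : ℕ) : Cardinal) ≤ Module.rank 𝕜 E) :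
    ∃ L₁ L₂ L₃ : Submodule 𝕜 E, finrank 𝕜 L₁ = 1 ∧ finrank 𝕜 L₂ = 1 ∧ finrank 𝕜 L₃ = 1 ∧
      S ⟂ L₁ ∧ S ⟂ L₂ ∧ S ⟂ L₃ ∧ L₁ ⟂ L₂ ∧ L₁ ⟂ L₃ ∧ L₂ ⟂ L₃ := by
  have hlt {T : Submodule 𝕜 E} (hT : finrank 𝕜 T ≤ finrank 𝕜 S + 2) :
      (finrank 𝕜 T : Cardinal) < Module.rank 𝕜 E :=
    (Nat.cast_lt.2 (by omega)).trans_le h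
  obtain ⟨L₁, hL₁, hSL₁⟩ := exists_finrank_eq_one_isOrtho (hlt le_self_add)
  have : FiniteDimensional 𝕜 L₁ := Module.finite_of_finrank_eq_succ hL₁
  have h₁ := finrank_add_le_finrank_add_finrank S L₁
  obtain ⟨L₂, hL₂, hSL₂⟩ :=
    exists_finrank_eq_one_isOrtho (hlt (by omega : finrank 𝕜 ↥(S ⊔ L₁) ≤ _))
  have : FiniteDimensional 𝕜 L₂ := Module.finite_of_finrank_eq_succ hL₂
  have h₂ := finrank_add_le_finrank_add_finrank (S ⊔ L₁) L₂
  obtain ⟨L₃, hL₃, hSL₃⟩ :=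
    exists_finrank_eq_one_isOrtho (hlt (by omega : finrank 𝕜 ↥(S ⊔ L₁ ⊔ L₂) ≤ _))
  simp only [isOrtho_sup_left] at hSL₂ hSL₃
  exact ⟨L₁, L₂, L₃, hL₁, hL₂, hL₃, hSL₁, hSL₂.1, hSL₃.1.1, hSL₂.2, hSL₃.1.2, hSL₃.2⟩

end InnerProductSpace

end Submodule

section Compatible

open Submodule

variable {H : Type*} [NormedAddCommGroup H] [InnerProductSpace ℂ H] {k : ℕ}

def OrthoAdjacent (k : ℕ) (X Y : Submodule ℂ H) : Prop :=
  finrank ℂ ↥(X ⊓ Y) = k - 1 ∧ Compatible X Y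

theorem orthoAdjacent_sup_of_isOrtho {U V Z : Submodule ℂ H} (hUV : U ⟂ V) (hUZ : U ⟂ Z)
    (hVZ : V ⟂ Z) (hZ : finrank ℂ Z = k - 1) : OrthoAdjacent k (U ⊔ Z) (V ⊔ Z) :=
  ⟨by rw [sup_inf_sup_eq_of_isOrtho_s16 hUV hUZ, hZ], U, V, Z, hUV, hUZ, hVZ, rfl, rfl⟩

theorem Compatible.orthogonal_inf_isOrtho {A B : Submodule ℂ H} (h : Compatible A B) :
    (A ⊓ B)ᗮ ⊓ A ⟂ B := by
  obtain ⟨A', B', Z, hA'B', hA'Z, hB'Z, rfl, rfl⟩ := h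
  rw [sup_inf_sup_eq_of_isOrtho_s16 hA'B' hA'Z, inf_comm, sup_inf_assoc_of_le Z hA'Z,
    inf_orthogonal_eq_bot, sup_bot_eq]
  exact isOrtho_sup_right.2 ⟨hA'B', hA'Z⟩

theorem Compatible.inf_sup_eq {A C₁ C₂ : Submodule ℂ H} [FiniteDimensional ℂ ↥(A ⊓ C₁)]
    (h₁ : Compatible A C₁) (h₂ : Compatible A C₂) (h : A ⊓ C₁ = A ⊓ C₂) :
    A ⊓ (C₁ ⊔ C₂) = A ⊓ C₁ := by
  set D := A ⊓ C₁
  have hE : Dᗮ ⊓ A ⟂ C₁ ⊔ C₂ :=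
    isOrtho_sup_right.2 ⟨h₁.orthogonal_inf_isOrtho, h ▸ h₂.orthogonal_inf_isOrtho⟩
  calc A ⊓ (C₁ ⊔ C₂) = (D ⊔ Dᗮ ⊓ A) ⊓ (C₁ ⊔ C₂) := by
        rw [sup_orthogonal_inf_of_hasOrthogonalProjection inf_le_left]
    _ = D := by
        rw [sup_inf_assoc_of_le _ (inf_le_right.trans le_sup_left), hE.disjoint.eq_bot,
          sup_bot_eq]

theorem finrank_add_add_le_of_compatible {D C₁ C₂ C₃ P : Submodule ℂ H} [FiniteDimensional ℂ P]
    (h₁₂ : Compatible C₁ C₂) (h₁₃ : Compatible C₁ C₃) (h₂₃ : Compatible C₂ C₃)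
    (hD₁₂ : C₁ ⊓ C₂ = D) (hD₁₃ : C₁ ⊓ C₃ = D) (hD₂₃ : C₂ ⊓ C₃ = D)
    (hC₁ : C₁ ≤ P) (hC₂ : C₂ ≤ P) (hC₃ : C₃ ≤ P) :
    finrank ℂ C₁ + finrank ℂ C₂ + finrank ℂ C₃ ≤ finrank ℂ P + 2 * finrank ℂ D := by
  have : FiniteDimensional ℂ C₁ := finiteDimensional_of_le hC₁
  have : FiniteDimensional ℂ C₂ := finiteDimensional_of_le hC₂
  have : FiniteDimensional ℂ C₃ := finiteDimensional_of_le hC₃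
  have hDC₁ : D ≤ C₁ := hD₁₂ ▸ inf_le_left
  have hDC₂ : D ≤ C₂ := hD₁₂ ▸ inf_le_right
  have hDC₃ : D ≤ C₃ := hD₁₃ ▸ inf_le_right
  have : FiniteDimensional ℂ D := finiteDimensional_of_le hDC₁
  have h₁ := finrank_add_inf_finrank_orthogonal hDC₁
  have h₂ := finrank_add_inf_finrank_orthogonal hDC₂
  have h₃ := finrank_add_inf_finrank_orthogonal hDC₃
  have hE₁₂ : Dᗮ ⊓ C₁ ⟂ Dᗮ ⊓ C₂ := (hD₁₂ ▸ h₁₂.orthogonal_inf_isOrtho).mono_right inf_le_right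
  have hE₁₃ : Dᗮ ⊓ C₁ ⟂ Dᗮ ⊓ C₃ := (hD₁₃ ▸ h₁₃.orthogonal_inf_isOrtho).mono_right inf_le_right
  have hE₂₃ : Dᗮ ⊓ C₂ ⟂ Dᗮ ⊓ C₃ := (hD₂₃ ▸ h₂₃.orthogonal_inf_isOrtho).mono_right inf_le_right
  have hDE : ∀ C : Submodule ℂ H, D ⟂ Dᗮ ⊓ C := fun C =>
    (isOrtho_orthogonal_right D).mono_right inf_le_left
  have hsum : finrank ℂ ↥(D ⊔ Dᗮ ⊓ C₁ ⊔ Dᗮ ⊓ C₂ ⊔ Dᗮ ⊓ C₃) = finrank ℂ D +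
      finrank ℂ ↥(Dᗮ ⊓ C₁) + finrank ℂ ↥(Dᗮ ⊓ C₂) + finrank ℂ ↥(Dᗮ ⊓ C₃) := by
    rw [IsOrtho.finrank_sup (isOrtho_sup_left.2 ⟨isOrtho_sup_left.2 ⟨hDE _, hE₁₃⟩, hE₂₃⟩),
      IsOrtho.finrank_sup (isOrtho_sup_left.2 ⟨hDE _, hE₁₂⟩), IsOrtho.finrank_sup (hDE _)]
  have hle : D ⊔ Dᗮ ⊓ C₁ ⊔ Dᗮ ⊓ C₂ ⊔ Dᗮ ⊓ C₃ ≤ P :=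
    sup_le (sup_le (sup_le (hDC₁.trans hC₁) (inf_le_right.trans hC₁)) (inf_le_right.trans hC₂))
      (inf_le_right.trans hC₃)
  have := finrank_mono hle
  omega

theorem orthoAdjacent_sup_of_isOrtho_of_le {X L Z : Submodule ℂ H} [FiniteDimensional ℂ Z]
    (hZX : Z ≤ X) (hXL : X ⟂ L) (hZ : finrank ℂ Z = k - 1) : OrthoAdjacent k X (L ⊔ Z) := by
  have hX : Zᗮ ⊓ X ⊔ Z = X := by
    rw [sup_comm, sup_orthogonal_inf_of_hasOrthogonalProjection hZX]
  rw [← hX]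
  exact orthoAdjacent_sup_of_isOrtho (hXL.mono_left inf_le_right)
    ((isOrtho_orthogonal_left Z).mono_left inf_le_left) (hXL.symm.mono_right hZX) hZ

theorem inf_le_of_orthoAdjacent_of_le_sup (hk : 0 < k) {A B C₁ C₂ C₃ : Submodule ℂ H}
    [FiniteDimensional ℂ C₁] [FiniteDimensional ℂ C₂] [FiniteDimensional ℂ C₃]
    (hC₁ : finrank ℂ C₁ = k) (hC₂ : finrank ℂ C₂ = k) (hC₃ : finrank ℂ C₃ = k)
    (hAC₁ : OrthoAdjacent k A C₁) (hAC₂ : OrthoAdjacent k A C₂)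
    (hAC₃ : finrank ℂ ↥(A ⊓ C₃) = k - 1) (hBC₃ : finrank ℂ ↥(B ⊓ C₃) = k - 1)
    (h₁₂ : OrthoAdjacent k C₁ C₂) (h₁₃ : OrthoAdjacent k C₁ C₃) (h₂₃ : OrthoAdjacent k C₂ C₃)
    (hDA : C₁ ⊓ C₂ ≤ A) (hBP : B ≤ C₁ ⊔ C₂) : C₁ ⊓ C₂ ≤ B := by
  have hD : finrank ℂ ↥(C₁ ⊓ C₂) = k - 1 := h₁₂.1
  have hAC₁D : A ⊓ C₁ = C₁ ⊓ C₂ :=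
    (eq_of_le_of_finrank_le (le_inf hDA inf_le_left) (by rw [hAC₁.1, hD])).symm
  have hAC₂D : A ⊓ C₂ = C₁ ⊓ C₂ :=
    (eq_of_le_of_finrank_le (le_inf hDA inf_le_right) (by rw [hAC₂.1, hD])).symm
  have hAP : A ⊓ (C₁ ⊔ C₂) = C₁ ⊓ C₂ :=
    (hAC₁.2.inf_sup_eq hAC₂.2 (hAC₁D.trans hAC₂D.symm)).trans hAC₁D
  have hDC₃ : C₁ ⊓ C₂ ≤ C₃ := by
    rcases inf_le_or_le_sup_of_finrank_inf hC₃ (inf_comm C₁ C₃ ▸ h₁₃.1) (inf_comm C₂ C₃ ▸ h₂₃.1)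
      hD with h | hC₃P
    · exact h
    · have : A ⊓ C₃ = C₁ ⊓ C₂ :=
        eq_of_le_of_finrank_le (hAP ▸ inf_le_inf_left A hC₃P) (by rw [hAC₃, hD])
      exact this ▸ inf_le_right
  by_cases hC₃P : C₃ ≤ C₁ ⊔ C₂
  · exfalso
    have hD₁₃ : C₁ ⊓ C₃ = C₁ ⊓ C₂ :=
      (eq_of_le_of_finrank_le (le_inf inf_le_left hDC₃) (by rw [h₁₃.1, hD])).symm
    have hD₂₃ : C₂ ⊓ C₃ = C₁ ⊓ C₂ :=
      (eq_of_le_of_finrank_le (le_inf inf_le_right hDC₃) (by rw [h₂₃.1, hD])).symm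
    have := finrank_add_add_le_of_compatible h₁₂.2 h₁₃.2 h₂₃.2 rfl hD₁₃ hD₂₃ le_sup_left
      le_sup_right hC₃P
    have := finrank_sup_add_finrank_inf_eq C₁ C₂
    omega
  · have hC₃D : C₃ ⊓ (C₁ ⊔ C₂) = C₁ ⊓ C₂ := by
      have := finrank_lt_finrank_of_lt (inf_le_left.lt_of_ne fun h => hC₃P (inf_eq_left.1 h))
      exact (eq_of_le_of_finrank_le (le_inf hDC₃ (inf_le_left.trans le_sup_left)) (by omega)).symm
    have hBD : B ⊓ C₃ = B ⊓ (C₁ ⊓ C₂) := by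
      rw [← hC₃D, ← inf_assoc, inf_right_comm, inf_eq_left.2 hBP]
    exact inf_eq_right.1 (eq_of_le_of_finrank_le inf_le_right (by rw [← hBD, hBC₃, hD]))

theorem finrank_inf_eq_of_orthoAdjacent_triangle (hk : 0 < k) {A B C₁ C₂ C₃ : Submodule ℂ H}
    [FiniteDimensional ℂ A] [FiniteDimensional ℂ B] [FiniteDimensional ℂ C₁]
    [FiniteDimensional ℂ C₂] [FiniteDimensional ℂ C₃]
    (hA : finrank ℂ A = k) (hB : finrank ℂ B = k) (hC₁ : finrank ℂ C₁ = k)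
    (hC₂ : finrank ℂ C₂ = k) (hC₃ : finrank ℂ C₃ = k) (hAB : A ≠ B)
    (hAC₁ : OrthoAdjacent k A C₁) (hAC₂ : OrthoAdjacent k A C₂)
    (hAC₃ : finrank ℂ ↥(A ⊓ C₃) = k - 1)
    (hBC₁ : OrthoAdjacent k B C₁) (hBC₂ : OrthoAdjacent k B C₂)
    (hBC₃ : finrank ℂ ↥(B ⊓ C₃) = k - 1)
    (h₁₂ : OrthoAdjacent k C₁ C₂) (h₁₃ : OrthoAdjacent k C₁ C₃) (h₂₃ : OrthoAdjacent k C₂ C₃) :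
    finrank ℂ ↥(A ⊓ B) = k - 1 := by
  rcases inf_le_or_le_sup_of_finrank_inf hA hAC₁.1 hAC₂.1 h₁₂.1 with hDA | hAP <;>
    rcases inf_le_or_le_sup_of_finrank_inf hB hBC₁.1 hBC₂.1 h₁₂.1 with hDB | hBP
  · exact finrank_inf_eq_pred_of_le_inf hA hB hAB (le_inf hDA hDB) h₁₂.1
  · have hDB := inf_le_of_orthoAdjacent_of_le_sup hk hC₁ hC₂ hC₃ hAC₁ hAC₂ hAC₃ hBC₃ h₁₂ h₁₃ h₂₃
      hDA hBP
    exact finrank_inf_eq_pred_of_le_inf hA hB hAB (le_inf hDA hDB) h₁₂.1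
  · have hDA := inf_le_of_orthoAdjacent_of_le_sup hk hC₁ hC₂ hC₃ hBC₁ hBC₂ hBC₃ hAC₃ h₁₂ h₁₃ h₂₃
      hDB hAP
    exact finrank_inf_eq_pred_of_le_inf hA hB hAB (le_inf hDA hDB) h₁₂.1
  · have hP : finrank ℂ ↥(C₁ ⊔ C₂) ≤ k + 1 := by
      have := finrank_sup_add_finrank_inf_eq C₁ C₂
      have := h₁₂.1
      omega
    exact finrank_inf_eq_pred_of_finrank_sup_le hA hB hAB
      ((finrank_mono (sup_le hAP hBP)).trans hP)

theorem exists_orthoAdjacent_triangle (hk : 0 < k) {X Y : Submodule ℂ H}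
    [FiniteDimensional ℂ X] [FiniteDimensional ℂ Y] (hX : finrank ℂ X = k)
    (hY : finrank ℂ Y = k) (hXY : finrank ℂ ↥(X ⊓ Y) = k - 1)
    (hH : ((k + 4 : ℕ) : Cardinal) ≤ Module.rank ℂ H) :
    ∃ W₁ W₂ W₃ : {W : Submodule ℂ H // finrank ℂ W = k},
      OrthoAdjacent k X W₁.1 ∧ OrthoAdjacent k X W₂.1 ∧ OrthoAdjacent k X W₃.1 ∧
      OrthoAdjacent k Y W₁.1 ∧ OrthoAdjacent k Y W₂.1 ∧ OrthoAdjacent k Y W₃.1 ∧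
      OrthoAdjacent k W₁.1 W₂.1 ∧ OrthoAdjacent k W₁.1 W₃.1 ∧ OrthoAdjacent k W₂.1 W₃.1 := by
  have hsup : finrank ℂ ↥(X ⊔ Y) = k + 1 := by
    have := finrank_sup_add_finrank_inf_eq X Y
    omega
  obtain ⟨L₁, L₂, L₃, hL₁, hL₂, hL₃, hXYL₁, hXYL₂, hXYL₃, h₁₂, h₁₃, h₂₃⟩ :=
    exists_three_isOrtho_lines (S := X ⊔ Y) (by rwa [hsup])
  have hZ : X ⊓ Y ≤ X ⊔ Y := inf_le_left.trans le_sup_left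
  have hW {L : Submodule ℂ H} (hL : finrank ℂ L = 1) (hXYL : X ⊔ Y ⟂ L) :
      finrank ℂ ↥(L ⊔ X ⊓ Y) = k := by
    have : FiniteDimensional ℂ L := Module.finite_of_finrank_eq_succ hL
    rw [(hXYL.symm.mono_right hZ).finrank_sup, hL, hXY]
    omega
  have hXW {L : Submodule ℂ H} (hXYL : X ⊔ Y ⟂ L) :
      OrthoAdjacent k X (L ⊔ X ⊓ Y) ∧ OrthoAdjacent k Y (L ⊔ X ⊓ Y) :=
    ⟨orthoAdjacent_sup_of_isOrtho_of_le inf_le_left (hXYL.mono_left le_sup_left) hXY,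
      orthoAdjacent_sup_of_isOrtho_of_le inf_le_right (hXYL.mono_left le_sup_right) hXY⟩
  have hWW {L L' : Submodule ℂ H} (hLL' : L ⟂ L') (hXYL : X ⊔ Y ⟂ L) (hXYL' : X ⊔ Y ⟂ L') :
      OrthoAdjacent k (L ⊔ X ⊓ Y) (L' ⊔ X ⊓ Y) :=
    orthoAdjacent_sup_of_isOrtho hLL' (hXYL.symm.mono_right hZ) (hXYL'.symm.mono_right hZ) hXY
  exact ⟨⟨_, hW hL₁ hXYL₁⟩, ⟨_, hW hL₂ hXYL₂⟩, ⟨_, hW hL₃ hXYL₃⟩, (hXW hXYL₁).1, (hXW hXYL₂).1,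
    (hXW hXYL₃).1, (hXW hXYL₁).2, (hXW hXYL₂).2, (hXW hXYL₃).2, hWW h₁₂ hXYL₁ hXYL₂,
    hWW h₁₃ hXYL₁ hXYL₃, hWW h₂₃ hXYL₂ hXYL₃⟩

end Compatible

theorem stmt_16_general {H : Type*} [NormedAddCommGroup H] [InnerProductSpace ℂ H]
    {k : ℕ} (hk : 2 < 2 * k) (hdim : (2 * k : Cardinal) < Module.rank ℂ H)
    (f : {X : Submodule ℂ H // Module.finrank ℂ ↥X = k} →
         {X : Submodule ℂ H // Module.finrank ℂ ↥X = k})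
    (hinj : Function.Injective f)
    (horth : ∀ X Y, X.1 ⟂ Y.1 → (f X).1 ⟂ (f Y).1)
    (hoadj : ∀ X Y : {X : Submodule ℂ H // Module.finrank ℂ ↥X = k},
      Module.finrank ℂ ↥(X.1 ⊓ Y.1) = k - 1 → Compatible X.1 Y.1 →
      Module.finrank ℂ ↥((f X).1 ⊓ (f Y).1) = k - 1 ∧ Compatible (f X).1 (f Y).1) :
    ∀ X Y : {X : Submodule ℂ H // Module.finrank ℂ ↥X = k},
      Module.finrank ℂ ↥(X.1 ⊓ Y.1) = k - 1 →
      Module.finrank ℂ ↥((f X).1 ⊓ (f Y).1) = k - 1 := by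
  intro X Y hXY
  have hk : 0 < k := by omega
  have hfin (W : {X : Submodule ℂ H // finrank ℂ ↥X = k}) : FiniteDimensional ℂ W.1 :=
    Module.finite_of_finrank_pos (by rw [W.2]; exact hk)
  have hne : (f X).1 ≠ (f Y).1 := fun h => by
    rw [hinj (Subtype.ext h), inf_idem, Y.2] at hXY
    omega
  rcases (Cardinal.add_one_le_of_lt hdim).eq_or_lt with hrank | hrank
  · have : FiniteDimensional ℂ H := .of_rank_eq_nat (n := 2 * k + 1) (by rw [← hrank]; norm_cast)
    have hH : finrank ℂ H = 2 * k + 1 := finrank_eq_of_rank_eq (by rw [← hrank]; norm_cast)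
    let V : {X : Submodule ℂ H // finrank ℂ ↥X = k} :=
      ⟨(X.1 ⊔ Y.1)ᗮ, Submodule.finrank_orthogonal_sup_eq hH hk X.2 Y.2 hXY⟩
    have hXV : X.1 ⟂ V.1 := (Submodule.isOrtho_orthogonal_right _).mono_left le_sup_left
    have hYV : Y.1 ⟂ V.1 := (Submodule.isOrtho_orthogonal_right _).mono_left le_sup_right
    exact Submodule.finrank_inf_eq_pred_of_isOrtho hH (f X).2 (f Y).2 (f V).2 hne (horth X V hXV)
      (horth Y V hYV)
  · obtain ⟨W₁, W₂, W₃, hXW₁, hXW₂, hXW₃, hYW₁, hYW₂, hYW₃, h₁₂, h₁₃, h₂₃⟩ :=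
      exists_orthoAdjacent_triangle hk X.2 Y.2 hXY
        (le_trans (by exact_mod_cast (by omega : k + 4 ≤ 2 * k + 1 + 1))
          (Cardinal.add_one_le_of_lt hrank))
    have hf {U V} (h : OrthoAdjacent k U.1 V.1) : OrthoAdjacent k (f U).1 (f V).1 :=
      hoadj U V h.1 h.2
    exact finrank_inf_eq_of_orthoAdjacent_triangle hk (f X).2 (f Y).2 (f W₁).2 (f W₂).2 (f W₃).2
      hne (hf hXW₁) (hf hXW₂) (hf hXW₃).1 (hf hYW₁) (hf hYW₂) (hf hYW₃).1 (hf h₁₂) (hf h₁₃) (hf h₂₃)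

theorem stmt_16 {H : Type*} [NormedAddCommGroup H] [InnerProductSpace ℂ H] [CompleteSpace H]
    {k : ℕ} (hk : 2 < 2 * k) (hdim : (2 * k : Cardinal) < Module.rank ℂ H)
    (f : {X : Submodule ℂ H // Module.finrank ℂ ↥X = k} →
         {X : Submodule ℂ H // Module.finrank ℂ ↥X = k})
    (hinj : Function.Injective f)
    (horth : ∀ X Y, X.1 ⟂ Y.1 → (f X).1 ⟂ (f Y).1)
    (hoadj : ∀ X Y : {X : Submodule ℂ H // Module.finrank ℂ ↥X = k},
      Module.finrank ℂ ↥(X.1 ⊓ Y.1) = k - 1 → Compatible X.1 Y.1 →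
      Module.finrank ℂ ↥((f X).1 ⊓ (f Y).1) = k - 1 ∧ Compatible (f X).1 (f Y).1) :
    ∀ X Y : {X : Submodule ℂ H // Module.finrank ℂ ↥X = k},
      Module.finrank ℂ ↥(X.1 ⊓ Y.1) = k - 1 →
      Module.finrank ℂ ↥((f X).1 ⊓ (f Y).1) = k - 1 :=
  stmt_16_general hk hdim f hinj horth hoadj
end

section
/- Let H be a finite-dimensional complex Hilbert space with dim H > 2k ≥ 2. If f : G_k(H) → G_k(H) preserves orthogonality in both directions (X ⊥ Y iff f(X) ⊥ f(Y)), then f is injective. -/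
/-!
If `X ≠ Y` are `k`-dimensional, then `Y ⊄ X`, so `Xᗮ ⊄ Yᗮ`: some `w ∈ Xᗮ` is not orthogonal
to `Y`. As `dim Xᗮ = dim H - k ≥ k`, the line through `w` extends to a `k`-dimensional
`Z ≤ Xᗮ`. Then `Z ⟂ X` but not `Z ⟂ Y`, so `f X = f Y` would contradict the fact that `f`
preserves orthogonality in both directions.
-/

open Module

namespace Submodule

theorem exists_le_le_finrank_eq {K V : Type*} [DivisionRing K] [AddCommGroup V]
    [Module K V] [FiniteDimensional K V] {U T : Submodule K V} (hUT : U ≤ T) {k : ℕ}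
    (hUk : finrank K U ≤ k) (hkT : k ≤ finrank K T) :
    ∃ W : Submodule K V, U ≤ W ∧ W ≤ T ∧ finrank K W = k := by
  induction k, hUk using Nat.le_induction with
  | base => exact ⟨U, le_rfl, hUT, rfl⟩
  | succ k _ ih =>
    obtain ⟨W, hUW, hWT, hWk⟩ := ih (by omega)
    obtain ⟨v, hvT, hvW⟩ : ∃ v ∈ T, v ∉ W :=
      SetLike.not_le_iff_exists.mp fun hTW ↦ by have := finrank_mono hTW; omega
    refine ⟨W ⊔ span K {v}, hUW.trans le_sup_left,
      sup_le hWT ((span_singleton_le_iff_mem v T).mpr hvT), ?_⟩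
    rw [finrank_sup_span_singleton hvW, hWk]

variable {𝕜 E : Type*} [RCLike 𝕜] [NormedAddCommGroup E] [InnerProductSpace 𝕜 E]
  [FiniteDimensional 𝕜 E]

theorem exists_isOrtho_not_isOrtho {k : ℕ} (hk : 1 ≤ k)
    (hdim : 2 * k ≤ finrank 𝕜 E) {X Y : Submodule 𝕜 E} (hX : finrank 𝕜 X = k)
    (hY : finrank 𝕜 Y = k) (hXY : X ≠ Y) :
    ∃ Z : Submodule 𝕜 E, finrank 𝕜 Z = k ∧ Z ⟂ X ∧ ¬ Z ⟂ Y := by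
  have hYX : ¬ Y ≤ X := fun h ↦ hXY (eq_of_le_of_finrank_eq h (hY.trans hX.symm)).symm
  obtain ⟨w, hwX, hwY⟩ : ∃ w ∈ Xᗮ, w ∉ Yᗮ :=
    SetLike.not_le_iff_exists.mp (mt orthogonal_le_orthogonal_iff.mp hYX)
  have hw : w ≠ 0 := by rintro rfl; exact hwY (zero_mem _)
  have hXperp : k ≤ finrank 𝕜 Xᗮ := by
    have := finrank_add_finrank_orthogonal X
    omega
  obtain ⟨Z, hwZ, hZX, hZk⟩ := exists_le_le_finrank_eq
    ((span_singleton_le_iff_mem w Xᗮ).mpr hwX) (by rwa [finrank_span_singleton hw]) hXperp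
  refine ⟨Z, hZk, isOrtho_iff_le.mpr hZX, fun hZY ↦ hwY ?_⟩
  exact isOrtho_iff_le.mp hZY (hwZ (mem_span_singleton_self w))

end Submodule

theorem stmt_17 {H : Type*} [NormedAddCommGroup H] [InnerProductSpace ℂ H]
    [FiniteDimensional ℂ H] {k : ℕ} (hk : 1 ≤ k) (hdim : 2 * k < Module.finrank ℂ H)
    (f : {X : Submodule ℂ H // Module.finrank ℂ ↥X = k} →
         {X : Submodule ℂ H // Module.finrank ℂ ↥X = k})
    (horth : ∀ X Y, (X.1 ⟂ Y.1 ↔ (f X).1 ⟂ (f Y).1)) :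
    Function.Injective f := by
  intro X Y hf
  by_contra hXY
  obtain ⟨Z, hZk, hZX, hZY⟩ :=
    Submodule.exists_isOrtho_not_isOrtho hk hdim.le X.2 Y.2 (Subtype.coe_injective.ne hXY)
  have hfZX := (horth ⟨Z, hZk⟩ X).mp hZX
  rw [hf] at hfZX
  exact hZY ((horth ⟨Z, hZk⟩ Y).mpr hfZX)
end

section
/- Let H be a complex Hilbert space of finite dimension n > 2k, and let f : G_k(H) → G_k(H) preserve orthogonality in both directions. If X_1,…,X_i, Y ∈ G_k(H) are mutually distinct, Y is not contained in X_1 + … + X_i, and dim(X_1 + … + X_i) ≤ n − k, then f(Y) is not contained in f(X_1) + … + f(X_i). -/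
/-!
Let `S = X₁ + ⋯ + Xᵢ`. Since `Y ⊄ S = (Sᗮ)ᗮ`, some vector `b ∈ Sᗮ` is not orthogonal to `Y`,
and since `dim Sᗮ ≥ k` there is a `k`-dimensional `Z ≤ Sᗮ` containing `b`. Then `Z ⟂ Xⱼ` for
all `j`, so `f Z ⟂ f Xⱼ` for all `j`; if `f Y ≤ ∑ f Xⱼ` this gives `f Z ⟂ f Y`, hence `Z ⟂ Y`,
contradicting `b ∈ Z`.
-/

open Module Submodule

theorem Submodule.exists_le_le_finrank_eq_s18 {K V : Type*} [DivisionRing K] [AddCommGroup V]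
    [Module K V] [Module.Finite K V] {W V' : Submodule K V} (hWV' : W ≤ V') {k : ℕ}
    (hW : finrank K W ≤ k) (hV' : k ≤ finrank K V') :
    ∃ Z : Submodule K V, W ≤ Z ∧ Z ≤ V' ∧ finrank K Z = k := by
  obtain ⟨d, rfl⟩ := Nat.exists_eq_add_of_le hW
  induction d generalizing W with
  | zero => exact ⟨W, le_rfl, hWV', rfl⟩
  | succ d ih =>
    obtain ⟨m, hmV', hmW⟩ : ∃ m ∈ V', m ∉ W := SetLike.exists_of_lt <|
      hWV'.lt_of_ne fun h => by subst h; omega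
    have hrank := finrank_sup_span_singleton hmW
    obtain ⟨Z, hWZ, hZV', hZ⟩ :=
      ih (sup_le hWV' ((span_singleton_le_iff_mem m V').2 hmV')) (by omega) (by omega)
    exact ⟨Z, le_sup_left.trans hWZ, hZV', by omega⟩

theorem Submodule.exists_finrank_eq_le_orthogonal_not_isOrtho {𝕜 E : Type*} [RCLike 𝕜]
    [NormedAddCommGroup E] [InnerProductSpace 𝕜 E] [FiniteDimensional 𝕜 E]
    {S Y : Submodule 𝕜 E} (hYS : ¬ Y ≤ S) {k : ℕ} (hk0 : 0 < k) (hk : k ≤ finrank 𝕜 Sᗮ) :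
    ∃ Z : Submodule 𝕜 E, finrank 𝕜 Z = k ∧ Z ≤ Sᗮ ∧ ¬ Z ⟂ Y := by
  have hSY : ¬ Sᗮ ≤ Yᗮ := by
    rwa [← isOrtho_iff_le, isOrtho_comm, isOrtho_iff_le, orthogonal_orthogonal]
  obtain ⟨b, hbS, hbY⟩ := SetLike.not_le_iff_exists.1 hSY
  have hb0 : b ≠ 0 := fun h => hbY (h ▸ zero_mem _)
  obtain ⟨Z, hbZ, hZS, hZ⟩ := exists_le_le_finrank_eq_s18 ((span_singleton_le_iff_mem b _).2 hbS)
    (by rw [finrank_span_singleton hb0]; omega) hk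
  exact ⟨Z, hZ, hZS, fun hZY => hbY (isOrtho_iff_le.1 hZY (hbZ (mem_span_singleton_self b)))⟩

theorem stmt_18_general {H : Type*} [NormedAddCommGroup H] [InnerProductSpace ℂ H]
    [FiniteDimensional ℂ H] {n k : ℕ} (hn : Module.finrank ℂ H = n)
    (f : {X : Submodule ℂ H // Module.finrank ℂ ↥X = k} →
         {X : Submodule ℂ H // Module.finrank ℂ ↥X = k})
    (horth : ∀ X Y, (X.1 ⟂ Y.1 ↔ (f X).1 ⟂ (f Y).1))
    {i : ℕ} (X : Fin i → {X : Submodule ℂ H // Module.finrank ℂ ↥X = k})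
    (Y : {X : Submodule ℂ H // Module.finrank ℂ ↥X = k})
    (hYnle : ¬ Y.1 ≤ ⨆ j, (X j).1)
    (hsum : Module.finrank ℂ ↥(⨆ j, (X j).1) ≤ n - k) :
    ¬ (f Y).1 ≤ ⨆ j, (f (X j)).1 := by
  intro hle
  set S : Submodule ℂ H := ⨆ j, (X j).1
  have hk0 : 0 < k := Nat.pos_of_ne_zero fun hk => hYnle <| by
    rw [finrank_eq_zero.1 (Y.2.trans hk)]
    exact bot_le
  have hkn : k ≤ n := hn ▸ Y.2 ▸ Submodule.finrank_le Y.1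
  have hk : k ≤ finrank ℂ Sᗮ := by
    have := S.finrank_add_finrank_orthogonal
    omega
  obtain ⟨Z, hZk, hZS, hZY⟩ := exists_finrank_eq_le_orthogonal_not_isOrtho hYnle hk0 hk
  have hZX (j : Fin i) : Z ⟂ (X j).1 :=
    isOrtho_iff_le.2 (hZS.trans (orthogonal_le (le_iSup (fun j => (X j).1) j)))
  have hfZY : (f ⟨Z, hZk⟩).1 ⟂ (f Y).1 :=
    (isOrtho_iSup_right.2 fun j => (horth ⟨Z, hZk⟩ (X j)).1 (hZX j)).mono_right hle
  exact hZY ((horth ⟨Z, hZk⟩ Y).2 hfZY)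

theorem stmt_18 {H : Type*} [NormedAddCommGroup H] [InnerProductSpace ℂ H]
    [FiniteDimensional ℂ H] {n k : ℕ} (hn : Module.finrank ℂ H = n) (hdim : 2 * k < n)
    (f : {X : Submodule ℂ H // Module.finrank ℂ ↥X = k} →
         {X : Submodule ℂ H // Module.finrank ℂ ↥X = k})
    (horth : ∀ X Y, (X.1 ⟂ Y.1 ↔ (f X).1 ⟂ (f Y).1))
    {i : ℕ} (X : Fin i → {X : Submodule ℂ H // Module.finrank ℂ ↥X = k})
    (Y : {X : Submodule ℂ H // Module.finrank ℂ ↥X = k})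
    (hXinj : Function.Injective X) (hXY : ∀ j, X j ≠ Y)
    (hYnle : ¬ Y.1 ≤ ⨆ j, (X j).1)
    (hsum : Module.finrank ℂ ↥(⨆ j, (X j).1) ≤ n - k) :
    ¬ (f Y).1 ≤ ⨆ j, (f (X j)).1 :=
  stmt_18_general hn f horth X Y hYnle hsum
end

section
/- Let H be a complex Hilbert space of finite dimension n > 2k, k ≥ 2. Every map f : G_k(H) → G_k(H) that preserves the orthogonality relation in both directions is adjacency preserving: if dim(X ∩ Y) = k−1 then dim(f(X) ∩ f(Y)) = k−1. -/
open Module Submodule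

section Aux

variable {H : Type*} [NormedAddCommGroup H] [InnerProductSpace ℂ H] [FiniteDimensional ℂ H]

/-- Intermediate subspace of prescribed finrank. -/
lemma aux_exists_between_d (m d : ℕ) :
    ∀ (B A : Submodule ℂ H), B ≤ A → finrank ℂ B ≤ m → m ≤ finrank ℂ A →
      m - finrank ℂ B ≤ d → ∃ U : Submodule ℂ H, B ≤ U ∧ U ≤ A ∧ finrank ℂ U = m := by
  induction d with
  | zero =>
    intro B A hBA h1 h2 h3
    exact ⟨B, le_rfl, hBA, le_antisymm h1 (by omega)⟩
  | succ d ih =>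
    intro B A hBA h1 h2 h3
    rcases eq_or_lt_of_le h1 with he | hlt
    · exact ⟨B, le_rfl, hBA, he⟩
    · have hne : B ≠ A := by
        rintro rfl; omega
      have hBA' : B < A := lt_of_le_of_ne hBA hne
      obtain ⟨v, hvA, hvB⟩ := SetLike.exists_of_lt hBA'
      have hv0 : v ≠ 0 := fun h => hvB (h ▸ B.zero_mem)
      have hvB' : v ∈ B ⊔ (ℂ ∙ v) :=
        (le_sup_right : (ℂ ∙ v) ≤ B ⊔ (ℂ ∙ v)) (mem_span_singleton_self v)
      have hle : B ⊔ (ℂ ∙ v) ≤ A :=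
        sup_le hBA ((span_singleton_le_iff_mem v A).2 hvA)
      have hsum := Submodule.finrank_sup_add_finrank_inf_eq B (ℂ ∙ v)
      have hsv : finrank ℂ (ℂ ∙ v) = 1 := finrank_span_singleton hv0
      have hlt2 : B < B ⊔ (ℂ ∙ v) :=
        lt_of_le_of_ne le_sup_left (fun h => hvB (h ▸ hvB'))
      have hgt : finrank ℂ B < finrank ℂ ↥(B ⊔ (ℂ ∙ v)) :=
        Submodule.finrank_lt_finrank_of_lt hlt2
      have h1' : finrank ℂ ↥(B ⊔ (ℂ ∙ v)) ≤ m := by omega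
      obtain ⟨U, hU1, hU2, hU3⟩ := ih (B ⊔ (ℂ ∙ v)) A hle h1' h2 (by omega)
      exact ⟨U, le_trans le_sup_left hU1, hU2, hU3⟩

lemma aux_exists_between {m : ℕ} (B A : Submodule ℂ H) (hBA : B ≤ A)
    (h1 : finrank ℂ B ≤ m) (h2 : m ≤ finrank ℂ A) :
    ∃ U : Submodule ℂ H, B ≤ U ∧ U ≤ A ∧ finrank ℂ U = m :=
  aux_exists_between_d m m B A hBA h1 h2 (Nat.sub_le m _)

variable {k : ℕ}

/-- A subspace of dimension at least `k` is the sup of its `k`-dimensional subspaces. -/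
lemma aux_span_by_k (hk : 1 ≤ k) (A : Submodule ℂ H) (hA : k ≤ finrank ℂ A) :
    (⨆ (U : {X : Submodule ℂ H // finrank ℂ ↥X = k}) (_ : U.1 ≤ A), U.1) = A := by
  apply le_antisymm
  · exact iSup₂_le fun U h => h
  · intro v hv
    by_cases hv0 : v = 0
    · exact hv0 ▸ zero_mem _
    · obtain ⟨U, hBU, hUA, hUrk⟩ := aux_exists_between (ℂ ∙ v) A
        ((span_singleton_le_iff_mem v A).2 hv)
        (by rw [finrank_span_singleton hv0]; omega) hA
      have hle : U ≤ ⨆ (U : {X : Submodule ℂ H // finrank ℂ ↥X = k}) (_ : U.1 ≤ A), U.1 :=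
        le_iSup₂_of_le ⟨U, hUrk⟩ hUA le_rfl
      exact hle (hBU (mem_span_singleton_self v))

end Aux

theorem stmt_19 {H : Type*} [NormedAddCommGroup H] [InnerProductSpace ℂ H]
    [FiniteDimensional ℂ H] {k : ℕ} (hk : 2 ≤ k) (hdim : 2 * k < Module.finrank ℂ H)
    (f : {X : Submodule ℂ H // Module.finrank ℂ ↥X = k} →
         {X : Submodule ℂ H // Module.finrank ℂ ↥X = k})
    (horth : ∀ X Y, (X.1 ⟂ Y.1 ↔ (f X).1 ⟂ (f Y).1)) :
    ∀ X Y : {X : Submodule ℂ H // Module.finrank ℂ ↥X = k},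
      Module.finrank ℂ ↥(X.1 ⊓ Y.1) = k - 1 →
      Module.finrank ℂ ↥((f X).1 ⊓ (f Y).1) = k - 1 := by
  set V : Submodule ℂ H → Submodule ℂ H :=
    fun A => ⨆ (U : {X : Submodule ℂ H // Module.finrank ℂ ↥X = k}) (_ : U.1 ≤ A), (f U).1
    with hV
  have hVmono : ∀ {A B : Submodule ℂ H}, A ≤ B → V A ≤ V B := by
    intro A B hAB
    exact iSup₂_le fun U h => le_iSup₂_of_le U (h.trans hAB) le_rfl
  have hVle : ∀ (U : {X : Submodule ℂ H // Module.finrank ℂ ↥X = k}) (A : Submodule ℂ H), U.1 ≤ A → (f U).1 ≤ V A := by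
    intro U A h
    exact le_iSup₂_of_le U h le_rfl
  have horthsum : ∀ A : Submodule ℂ H, finrank ℂ A + finrank ℂ Aᗮ = finrank ℂ H :=
    fun A => Submodule.finrank_add_finrank_orthogonal A
  -- the key equivalence
  have hkey : ∀ (W : Submodule ℂ H), k ≤ finrank ℂ Wᗮ → ∀ U : {X : Submodule ℂ H // Module.finrank ℂ ↥X = k},
      ((f U).1 ≤ (V Wᗮ)ᗮ ↔ U.1 ≤ W) := by
    intro W hW U
    constructor
    · intro h
      have h2 : V Wᗮ ≤ (f U).1ᗮ :=
        (Submodule.isOrtho_comm.mp (Submodule.isOrtho_iff_le.mpr h) : _)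
      have h3 : ∀ Z : {X : Submodule ℂ H // Module.finrank ℂ ↥X = k}, Z.1 ≤ Wᗮ → U.1 ≤ Z.1ᗮ := by
        intro Z hZ
        have hfz : (f Z).1 ≤ (f U).1ᗮ := le_trans (hVle Z Wᗮ hZ) h2
        have : Z.1 ⟂ U.1 := (horth Z U).mpr (Submodule.isOrtho_iff_le.mpr hfz)
        exact Submodule.isOrtho_iff_le.mp this.symm
      have h4 : Wᗮ ≤ U.1ᗮ := by
        rw [← aux_span_by_k (by omega) Wᗮ hW]
        exact iSup₂_le fun Z hZ => Submodule.isOrtho_iff_le.mp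
          (Submodule.isOrtho_iff_le.mpr (h3 Z hZ)).symm
      calc U.1 ≤ Wᗮᗮ := Submodule.isOrtho_iff_le.mp
                (Submodule.isOrtho_iff_le.mpr h4).symm
        _ = W := Submodule.orthogonal_orthogonal W
    · intro h
      have h2 : V Wᗮ ≤ (f U).1ᗮ := by
        apply iSup₂_le
        intro Z hZ
        have hZU : Z.1 ⟂ U.1 := Submodule.isOrtho_iff_le.mpr
          (hZ.trans (Submodule.orthogonal_le h))
        exact Submodule.isOrtho_iff_le.mp ((horth Z U).mp hZU)
      exact Submodule.isOrtho_iff_le.mp (Submodule.isOrtho_iff_le.mpr h2).symm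
  -- growth lemma
  have hgrow : ∀ j, k ≤ j → ∀ W : Submodule ℂ H, finrank ℂ W = j → j ≤ finrank ℂ H - k - 1 →
      j ≤ finrank ℂ ((V Wᗮ)ᗮ) := by
    intro j hj
    induction j, hj using Nat.le_induction with
    | base =>
      intro W hW _
      have hWD : (⟨W, hW⟩ : {X : Submodule ℂ H // Module.finrank ℂ ↥X = k}).1 ≤ W := le_rfl
      have h1 : (f ⟨W, hW⟩).1 ≤ (V Wᗮ)ᗮ := by
        refine (hkey W ?_ ⟨W, hW⟩).mpr hWD
        have := horthsum W
        omega
      have := Submodule.finrank_mono h1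
      rw [(f ⟨W, hW⟩).2] at this
      exact this
    | succ j hj ih =>
      intro W hW hle
      obtain ⟨W₀, -, hW₀W, hW₀rk⟩ := aux_exists_between (m := j) (⊥ : Submodule ℂ H) W bot_le
        (by simp) (by omega)
      have hIH : j ≤ finrank ℂ ((V W₀ᗮ)ᗮ) := ih W₀ hW₀rk (by omega)
      have hW₀lt : W₀ < W := lt_of_le_of_ne hW₀W (by rintro rfl; omega)
      obtain ⟨v, hvW, hvW₀⟩ := SetLike.exists_of_lt hW₀lt
      have hv0 : v ≠ 0 := fun h => hvW₀ (h ▸ W₀.zero_mem)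
      obtain ⟨U, hvU, hUW, hUrk⟩ := aux_exists_between (m := k) (ℂ ∙ v) W
        ((span_singleton_le_iff_mem v W).2 hvW)
        (by rw [finrank_span_singleton hv0]; omega) (by omega)
      have hWperp : k ≤ finrank ℂ Wᗮ := by have := horthsum W; omega
      have hW₀perp : k ≤ finrank ℂ W₀ᗮ := by have := horthsum W₀; omega
      have hU1 : (f ⟨U, hUrk⟩).1 ≤ (V Wᗮ)ᗮ := (hkey W hWperp ⟨U, hUrk⟩).mpr hUW
      have hU2 : ¬ (f ⟨U, hUrk⟩).1 ≤ (V W₀ᗮ)ᗮ := by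
        intro h
        exact hvW₀ (((hkey W₀ hW₀perp ⟨U, hUrk⟩).mp h) (hvU (mem_span_singleton_self v)))
      have hmono : (V W₀ᗮ)ᗮ ≤ (V Wᗮ)ᗮ :=
        Submodule.orthogonal_le (hVmono (Submodule.orthogonal_le hW₀W))
      have hstrict : (V W₀ᗮ)ᗮ < (V Wᗮ)ᗮ :=
        lt_of_le_of_ne hmono (fun h => hU2 (h ▸ hU1))
      have := Submodule.finrank_lt_finrank_of_lt hstrict
      omega
  -- main proof
  intro X Y hXY
  have hXrk : finrank ℂ X.1 = k := X.2
  have hYrk : finrank ℂ Y.1 = k := Y.2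
  have hne1 : X.1 ≠ Y.1 := by
    intro h
    rw [h, inf_idem, hYrk] at hXY
    omega
  have hsupXY : finrank ℂ ↥(X.1 ⊔ Y.1) = k + 1 := by
    have := Submodule.finrank_sup_add_finrank_inf_eq X.1 Y.1
    rw [hXY, hXrk, hYrk] at this
    omega
  set M := X.1 ⊔ Y.1 with hM
  have hMperp : finrank ℂ Mᗮ = finrank ℂ H - k - 1 := by have := horthsum M; omega
  have hgrowM : finrank ℂ H - k - 1 ≤ finrank ℂ ((V Mᗮᗮ)ᗮ) :=
    hgrow (finrank ℂ H - k - 1) (by omega) Mᗮ hMperp (by omega)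
  rw [Submodule.orthogonal_orthogonal M] at hgrowM
  have hVM : finrank ℂ (V M) ≤ k + 1 := by have := horthsum (V M); omega
  -- injectivity of f at X, Y
  have hfne : (f X).1 ≠ (f Y).1 := by
    intro h
    have hperple : ∀ P Q : {X : Submodule ℂ H // Module.finrank ℂ ↥X = k}, (f P).1 = (f Q).1 → P.1ᗮ ≤ Q.1ᗮ := by
      intro P Q hPQ
      have hPk : k ≤ finrank ℂ P.1ᗮ := by have := horthsum P.1; have := P.2; omega
      rw [← aux_span_by_k (by omega) P.1ᗮ hPk]
      apply iSup₂_le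
      intro Z hZ
      have h1 : Z.1 ⟂ P.1 := Submodule.isOrtho_iff_le.mpr hZ
      have h2 : (f Z).1 ⟂ (f Q).1 := hPQ ▸ (horth Z P).mp h1
      exact Submodule.isOrtho_iff_le.mp ((horth Z Q).mpr h2)
    have hperp : X.1ᗮ = Y.1ᗮ :=
      le_antisymm (hperple X Y h) (hperple Y X h.symm)
    apply hne1
    rw [← Submodule.orthogonal_orthogonal X.1, ← Submodule.orthogonal_orthogonal Y.1, hperp]
  have hfX : (f X).1 ≤ V M := hVle X M le_sup_left
  have hfY : (f Y).1 ≤ V M := hVle Y M le_sup_right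
  have hfsup : finrank ℂ ↥((f X).1 ⊔ (f Y).1) ≤ k + 1 :=
    le_trans (Submodule.finrank_mono (sup_le hfX hfY)) hVM
  have hflt : (f X).1 < (f X).1 ⊔ (f Y).1 := by
    refine lt_of_le_of_ne le_sup_left (fun h => hfne ?_)
    have hYle : (f Y).1 ≤ (f X).1 := h ▸ le_sup_right
    exact (Submodule.eq_of_le_of_finrank_eq hYle (by rw [(f Y).2, (f X).2])).symm
  have hfsup_ge : k + 1 ≤ finrank ℂ ↥((f X).1 ⊔ (f Y).1) := by
    have := Submodule.finrank_lt_finrank_of_lt hflt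
    rw [(f X).2] at this
    omega
  have hfsup_eq : finrank ℂ ↥((f X).1 ⊔ (f Y).1) = k + 1 := le_antisymm hfsup hfsup_ge
  have := Submodule.finrank_sup_add_finrank_inf_eq (f X).1 (f Y).1
  rw [hfsup_eq, (f X).2, (f Y).2] at this
  omega
end
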